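/- arXiv:0904.4678 — 4 statements merged into one kernel-verified Lean document; each statement's English description precedes it below -/
import Mathlib

section
/- Suppose there exists x ∈ ℝ such that for every Lipschitz function z : ℝ → ℝ of bounded growth the real sequence of terminal values φ_{p_n+2}^n(z,x) converges as n → ∞. Then the sequence (μ^n) of probability measures on [0,1] generated by the functions σ^n converges weakly. -/
open MeasureTheory Filter Set Topology

noncomputable section

/-- The point `τ_t ∈ [a, a+h)` with `t - τ_t ∈ h·ℤ`. -/
def tauPt (a h t : ℝ) : ℝ := a + h * Int.fract ((t - a) / h)

/-- `ρ` is a δ-sequence: smooth, nonnegative, supported in `[0, 1/n]`, total integral 1. -/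
def IsDeltaSeq (ρ : ℕ → ℝ → ℝ) : Prop :=
  ∀ n : ℕ, 0 < n →
    ContDiff ℝ (⊤ : ℕ∞) (ρ n) ∧ (∀ s, 0 ≤ ρ n s) ∧
    (∀ s, s ∉ Set.Icc (0 : ℝ) (1 / (n : ℝ)) → ρ n s = 0) ∧
    (∫ s in (0 : ℝ)..(1 / (n : ℝ)), ρ n s) = 1

/-- `ρ₂` is a two-dimensional δ-sequence supported in `[0, 1/n]²`. -/
def IsDeltaSeq2 (ρ₂ : ℕ → ℝ → ℝ → ℝ) : Prop :=
  ∀ n : ℕ, 0 < n →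
    ContDiff ℝ (⊤ : ℕ∞) (fun p : ℝ × ℝ => ρ₂ n p.1 p.2) ∧ (∀ u v, 0 ≤ ρ₂ n u v) ∧
    (∀ u v, (u, v) ∉ Set.Icc (0 : ℝ) (1 / (n : ℝ)) ×ˢ Set.Icc (0 : ℝ) (1 / (n : ℝ)) → ρ₂ n u v = 0) ∧
    (∫ u in (0 : ℝ)..(1 / (n : ℝ)), ∫ v in (0 : ℝ)..(1 / (n : ℝ)), ρ₂ n u v) = 1

/-- Mollification `L_n = L * ρ_n`. -/
def mollL (L : ℝ → ℝ) (ρ : ℕ → ℝ → ℝ) (n : ℕ) (t : ℝ) : ℝ :=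
  ∫ s in (0 : ℝ)..(1 / (n : ℝ)), L (t + s) * ρ n s

/-- Mollification `f_n = f * ρ̃_n`. -/
def mollF (f : ℝ → ℝ → ℝ) (ρ₂ : ℕ → ℝ → ℝ → ℝ) (n : ℕ) (t x : ℝ) : ℝ :=
  ∫ u in (0 : ℝ)..(1 / (n : ℝ)), ∫ v in (0 : ℝ)..(1 / (n : ℝ)), f (t + u) (x + v) * ρ₂ n u v

/-- `F_n(x) = ∫_x^{1/n} ρ_n(s) ds`. -/
def Fcdf (ρ : ℕ → ℝ → ℝ) (n : ℕ) (x : ℝ) : ℝ := ∫ s in x..(1 / (n : ℝ)), ρ n s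

/-- Extension of `F_n` to `[-∞, +∞]`. -/
def FcdfE (ρ : ℕ → ℝ → ℝ) (n : ℕ) (x : EReal) : ℝ :=
  if x = ⊤ then 0 else if x = ⊥ then 1 else Fcdf ρ n x.toReal

/-- `F_n^{-1}(u) = sup {x : F_n(x) = u}`, as an element of `[-∞, +∞]`. -/
def FcdfInv (ρ : ℕ → ℝ → ℝ) (n : ℕ) (u : ℝ) : EReal :=
  sSup {x : EReal | FcdfE ρ n x = u}

/-- Membership in the class `G`. -/
def MemClassG (σ : ℝ → ℝ) : Prop :=
  ∃ (ι : Type) (A B : ι → ℝ),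
    (∀ i, Set.Ioc (A i) (B i) ⊆ Set.Icc 0 1) ∧
    (Pairwise fun i j => Disjoint (Set.Ioc (A i) (B i)) (Set.Ioc (A j) (B j))) ∧
    ∀ u ∈ Set.Icc (0 : ℝ) 1,
      (∀ i, u ∈ Set.Ioc (A i) (B i) → σ u = B i) ∧
      ((∀ i, u ∉ Set.Ioc (A i) (B i)) → σ u = u)

/-- Jump `ΔL(s) = L(s+) - L(s-)` of `L` at `s`. -/
def jumpAt (L : ℝ → ℝ) (s : ℝ) : ℝ := Function.rightLim L s - Function.leftLim L s

/-- Continuous part `L^c` of `L`:  `L^c(t) = L(t) - Σ_{a < s ≤ t} ΔL(s)`. -/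
def contPart (L : ℝ → ℝ) (a t : ℝ) : ℝ :=
  L t - ∑' s : ℝ, (Set.Ioc a t).indicator (jumpAt L) s

/-- Step function `σⁿ` associated with a partition `ξ`:  `σⁿ(u) = ξ_k` for
`ξ_{k-1} < u ≤ ξ_k`, and `σⁿ(0) = 0`. -/
def stepOf (ξ : ℕ → ℝ) (u : ℝ) : ℝ := if u = 0 then 0 else ξ (sInf {k | u ≤ ξ k})

/-- The Euler iterates `φ_k` along the partition `ξ`. -/
def phiIter (z : ℝ → ℝ) (x : ℝ) (ξ : ℕ → ℝ) : ℕ → ℝ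
  | 0 => x
  | k + 1 => phiIter z x ξ k + z (phiIter z x ξ k) * (ξ (k + 1) - ξ k)

/-- Step function `φⁿ` of the Euler iterates:  `φⁿ(u) = φ_k` for `ξ_{k-1} < u ≤ ξ_k`,
and `φⁿ(0) = x`. -/
def phiStepOf (z : ℝ → ℝ) (x : ℝ) (ξ : ℕ → ℝ) (u : ℝ) : ℝ :=
  if u = 0 then x else phiIter z x ξ (sInf {k | u ≤ ξ k})

/-- The Lebesgue–Stieltjes measure generated by the step function of the partition
`0 = ξ_0 ≤ ξ_1 ≤ … ≤ ξ_{m+2} = 1`. -/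
def partMeasure (ξ : ℕ → ℝ) (m : ℕ) : Measure ℝ :=
  ∑ k ∈ Finset.range (m + 2), ENNReal.ofReal (ξ (k + 1) - ξ k) • Measure.dirac (ξ k)

/-- The auxiliary Lipschitz functions `z_{q,ε}`. -/
def zqe (x q ε : ℝ) (p : ℝ) : ℝ :=
  if p ≤ x + q then 1 else if p ≤ x + q + ε then (x + q + ε - p) / ε else 0

namespace WCPM

/-- Finite "integral" of `g` against the partition measure. -/
def sAux (ξ' : ℕ → ℝ) (m : ℕ) (g : ℝ → ℝ) : ℝ :=
  ∑ k ∈ Finset.range (m + 2), (ξ' (k + 1) - ξ' k) * g (ξ' k)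

/-- Continuous ramp approximations of indicator of `Iic t`. -/
def rampF (t : ℝ) (m : ℕ) (w : ℝ) : ℝ := max 0 (min 1 (1 - (m : ℝ) * (w - t)))

/-- Indicator of `Iic t` as a real function. -/
def indF (t : ℝ) (w : ℝ) : ℝ := if w ≤ t then 1 else 0

section Partition

variable {ξ' : ℕ → ℝ} {m : ℕ}

lemma xi_mono (hmono : ∀ k, k < m + 2 → ξ' k ≤ ξ' (k + 1)) :
    ∀ {k l : ℕ}, k ≤ l → l ≤ m + 2 → ξ' k ≤ ξ' l := by
  intro k l hkl hl
  induction l with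
  | zero => obtain rfl : k = 0 := Nat.le_zero.mp hkl; exact le_rfl
  | succ n ih =>
    rcases Nat.eq_or_lt_of_le hkl with rfl | h
    · exact le_rfl
    · exact (ih (Nat.lt_succ_iff.mp h) (by omega)).trans (hmono n (by omega))

lemma xi_mem (h0 : ξ' 0 = 0) (htop : ξ' (m + 2) = 1)
    (hmono : ∀ k, k < m + 2 → ξ' k ≤ ξ' (k + 1)) {k : ℕ} (hk : k ≤ m + 2) :
    0 ≤ ξ' k ∧ ξ' k ≤ 1 :=
  ⟨h0 ▸ xi_mono hmono (Nat.zero_le k) hk, htop ▸ xi_mono hmono hk le_rfl⟩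

lemma sum_delta (h0 : ξ' 0 = 0) (htop : ξ' (m + 2) = 1) :
    ∑ k ∈ Finset.range (m + 2), (ξ' (k + 1) - ξ' k) = 1 := by
  rw [Finset.sum_range_sub (f := ξ'), h0, htop]; ring

lemma sAux_mono (h0 : ξ' 0 = 0) (htop : ξ' (m + 2) = 1)
    (hmono : ∀ k, k < m + 2 → ξ' k ≤ ξ' (k + 1)) {g g' : ℝ → ℝ}
    (h : ∀ w, 0 ≤ w → w ≤ 1 → g w ≤ g' w) : sAux ξ' m g ≤ sAux ξ' m g' := by
  refine Finset.sum_le_sum fun k hk => ?_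
  have hk' := Finset.mem_range.mp hk
  have hmem := xi_mem h0 htop hmono (le_of_lt hk')
  exact mul_le_mul_of_nonneg_left (h _ hmem.1 hmem.2) (sub_nonneg.mpr (hmono k hk'))

lemma sAux_congr (h0 : ξ' 0 = 0) (htop : ξ' (m + 2) = 1)
    (hmono : ∀ k, k < m + 2 → ξ' k ≤ ξ' (k + 1)) {g g' : ℝ → ℝ}
    (h : ∀ w, 0 ≤ w → w ≤ 1 → g w = g' w) : sAux ξ' m g = sAux ξ' m g' :=
  le_antisymm (sAux_mono h0 htop hmono fun w h1 h2 => (h w h1 h2).le)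
    (sAux_mono h0 htop hmono fun w h1 h2 => (h w h1 h2).ge)

lemma sAux_const (h0 : ξ' 0 = 0) (htop : ξ' (m + 2) = 1) (c : ℝ) :
    sAux ξ' m (fun _ => c) = c := by
  unfold sAux
  rw [← Finset.sum_mul, sum_delta h0 htop, one_mul]

end Partition

lemma phi_formula (g : ℝ → ℝ) (lam x : ℝ) (ξ'' : ℕ → ℝ) (k : ℕ) :
    phiIter (fun w => 1 + lam * g (w - x)) x ξ'' k
      = x + (ξ'' k - ξ'' 0)
        + lam * ∑ j ∈ Finset.range k,
            g (phiIter (fun w => 1 + lam * g (w - x)) x ξ'' j - x) * (ξ'' (j + 1) - ξ'' j) := by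
  induction k with
  | zero => simp [phiIter]
  | succ n ih =>
    rw [phiIter, ih, Finset.sum_range_succ, ih]
    ring

section Ramp

variable {t s : ℝ} {m m' : ℕ} {w w' : ℝ}

lemma rampF_nonneg : 0 ≤ rampF t m w := le_max_left _ _

lemma rampF_le_one : rampF t m w ≤ 1 := max_le zero_le_one (min_le_left _ _)

lemma rampF_abs_le_one : |rampF t m w| ≤ 1 :=
  abs_le.mpr ⟨by linarith [rampF_nonneg (t := t) (m := m) (w := w)], rampF_le_one⟩

lemma rampF_lip (t : ℝ) (m : ℕ) (w w' : ℝ) :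
    |rampF t m w - rampF t m w'| ≤ (m : ℝ) * |w - w'| := by
  have h1 : |rampF t m w - rampF t m w'|
      ≤ |min 1 (1 - (m : ℝ) * (w - t)) - min 1 (1 - (m : ℝ) * (w' - t))| := by
    unfold rampF
    rw [max_comm 0 (min 1 (1 - (m : ℝ) * (w - t))), max_comm 0 (min 1 (1 - (m : ℝ) * (w' - t)))]
    exact abs_max_sub_max_le_abs _ _ _
  have h2 : |min 1 (1 - (m : ℝ) * (w - t)) - min 1 (1 - (m : ℝ) * (w' - t))|
      ≤ |(1 - (m : ℝ) * (w - t)) - (1 - (m : ℝ) * (w' - t))| := by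
    refine le_trans (abs_min_sub_min_le_max 1 _ 1 _) ?_
    simp [abs_nonneg]
  have h3 : |(1 - (m : ℝ) * (w - t)) - (1 - (m : ℝ) * (w' - t))| = (m : ℝ) * |w - w'| := by
    have : (1 - (m : ℝ) * (w - t)) - (1 - (m : ℝ) * (w' - t)) = (m : ℝ) * (w' - w) := by ring
    rw [this, abs_mul, Nat.abs_cast, abs_sub_comm]
  linarith [h1.trans h2]

lemma rampF_of_le (h : w ≤ t) : rampF t m w = 1 := by
  unfold rampF
  have h1 : (m : ℝ) * (w - t) ≤ 0 :=
    mul_nonpos_of_nonneg_of_nonpos (Nat.cast_nonneg m) (by linarith)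
  rw [min_eq_left (by linarith), max_eq_right zero_le_one]

lemma rampF_of_ge (h : 1 ≤ (m : ℝ) * (w - t)) : rampF t m w = 0 := by
  unfold rampF
  exact max_eq_left (le_trans (min_le_right _ _) (by linarith))

lemma rampF_mono_t (h : t ≤ s) : rampF t m w ≤ rampF s m w := by
  unfold rampF
  refine max_le_max le_rfl (min_le_min le_rfl ?_)
  have := mul_le_mul_of_nonneg_left (sub_le_sub_left h w) (Nat.cast_nonneg (α := ℝ) m)
  linarith

lemma rampF_anti_m (h : m ≤ m') : rampF t m' w ≤ rampF t m w := by
  rcases le_or_gt w t with hw | hw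
  · rw [rampF_of_le hw, rampF_of_le hw]
  · unfold rampF
    refine max_le_max le_rfl (min_le_min le_rfl ?_)
    have := mul_le_mul_of_nonneg_right (show (m:ℝ) ≤ m' from Nat.cast_le.mpr h) (by linarith : (0:ℝ) ≤ w - t)
    linarith

lemma indF_nonneg : 0 ≤ indF t w := by unfold indF; split <;> norm_num

lemma indF_le_one : indF t w ≤ 1 := by unfold indF; split <;> norm_num

lemma indF_le_rampF : indF t w ≤ rampF t m w := by
  unfold indF
  split_ifs with h
  · rw [rampF_of_le h]
  · exact rampF_nonneg

lemma rampF_le_indF (h : s + 1 / ((m : ℝ) + 1) ≤ t) : rampF s (m + 1) w ≤ indF t w := by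
  unfold indF
  split_ifs with hw
  · exact rampF_le_one
  · push_neg at hw
    refine le_of_eq (rampF_of_ge ?_)
    have hm : (0:ℝ) < (m : ℝ) + 1 := by positivity
    have h1 : 1 / ((m : ℝ) + 1) < w - s := by linarith
    have h2 : (1:ℝ) < (w - s) * ((m : ℝ) + 1) := (div_lt_iff₀ hm).mp h1
    push_cast
    nlinarith

end Ramp


section Core

lemma key_est (ξ' : ℕ → ℝ) (m : ℕ) (h0 : ξ' 0 = 0) (htop : ξ' (m + 2) = 1)
    (hmono : ∀ k, k < m + 2 → ξ' k ≤ ξ' (k + 1)) (g : ℝ → ℝ) (L M lam x : ℝ)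
    (hL : 0 ≤ L) (hM0 : 0 ≤ M) (hlam : 0 < lam)
    (hLip : ∀ w w', |g w - g w'| ≤ L * |w - w'|) (hM : ∀ w, |g w| ≤ M) :
    |sAux ξ' m g - (phiIter (fun w => 1 + lam * g (w - x)) x ξ' (m + 2) - x - 1) / lam|
      ≤ L * M * lam := by
  set φ : ℕ → ℝ := phiIter (fun w => 1 + lam * g (w - x)) x ξ' with hφdef
  have hphi : ∀ k, φ k = x + (ξ' k - ξ' 0)
      + lam * ∑ j ∈ Finset.range k, g (φ j - x) * (ξ' (j + 1) - ξ' j) :=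
    fun k => phi_formula g lam x ξ' k
  have hR : ∀ k, k ≤ m + 2 →
      |∑ j ∈ Finset.range k, g (φ j - x) * (ξ' (j + 1) - ξ' j)| ≤ M := by
    intro k hk
    calc |∑ j ∈ Finset.range k, g (φ j - x) * (ξ' (j + 1) - ξ' j)|
        ≤ ∑ j ∈ Finset.range k, |g (φ j - x) * (ξ' (j + 1) - ξ' j)| :=
          Finset.abs_sum_le_sum_abs _ _
      _ ≤ ∑ j ∈ Finset.range k, M * (ξ' (j + 1) - ξ' j) := by
          refine Finset.sum_le_sum fun j hj => ?_
          have hj' : j < m + 2 := lt_of_lt_of_le (Finset.mem_range.mp hj) hk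
          rw [abs_mul, abs_of_nonneg (sub_nonneg.mpr (hmono j hj'))]
          exact mul_le_mul_of_nonneg_right (hM _) (sub_nonneg.mpr (hmono j hj'))
      _ = M * (ξ' k - ξ' 0) := by rw [← Finset.mul_sum, Finset.sum_range_sub]
      _ ≤ M := by
          have h1 := (xi_mem h0 htop hmono hk).2
          rw [h0]
          nlinarith
  have hdist : ∀ j, j < m + 2 → |g (ξ' j) - g (φ j - x)| ≤ L * (lam * M) := by
    intro j hj
    have h2 : ξ' j - (φ j - x)
        = -(lam * ∑ i ∈ Finset.range j, g (φ i - x) * (ξ' (i + 1) - ξ' i)) := by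
      rw [hphi j, h0]; ring
    calc |g (ξ' j) - g (φ j - x)| ≤ L * |ξ' j - (φ j - x)| := hLip _ _
      _ = L * (lam * |∑ i ∈ Finset.range j, g (φ i - x) * (ξ' (i + 1) - ξ' i)|) := by
          rw [h2, abs_neg, abs_mul, abs_of_pos hlam]
      _ ≤ L * (lam * M) := by
          have := hR j (le_of_lt hj)
          exact mul_le_mul_of_nonneg_left (mul_le_mul_of_nonneg_left this hlam.le) hL
  have hT : (φ (m + 2) - x - 1) / lam
      = ∑ j ∈ Finset.range (m + 2), g (φ j - x) * (ξ' (j + 1) - ξ' j) := by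
    rw [hphi (m + 2), h0, htop]
    field_simp
    ring
  rw [hT]
  have hsub : sAux ξ' m g - ∑ j ∈ Finset.range (m + 2), g (φ j - x) * (ξ' (j + 1) - ξ' j)
      = ∑ j ∈ Finset.range (m + 2), (ξ' (j + 1) - ξ' j) * (g (ξ' j) - g (φ j - x)) := by
    unfold sAux
    rw [← Finset.sum_sub_distrib]
    exact Finset.sum_congr rfl fun j hj => by ring
  rw [hsub]
  calc |∑ j ∈ Finset.range (m + 2), (ξ' (j + 1) - ξ' j) * (g (ξ' j) - g (φ j - x))|
      ≤ ∑ j ∈ Finset.range (m + 2), |(ξ' (j + 1) - ξ' j) * (g (ξ' j) - g (φ j - x))| :=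
        Finset.abs_sum_le_sum_abs _ _
    _ ≤ ∑ j ∈ Finset.range (m + 2), (ξ' (j + 1) - ξ' j) * (L * (lam * M)) := by
        refine Finset.sum_le_sum fun j hj => ?_
        have hj' := Finset.mem_range.mp hj
        rw [abs_mul, abs_of_nonneg (sub_nonneg.mpr (hmono j hj'))]
        exact mul_le_mul_of_nonneg_left (hdist j hj') (sub_nonneg.mpr (hmono j hj'))
    _ = L * M * lam := by
        rw [← Finset.sum_mul, sum_delta h0 htop]; ring

lemma sAux_tendsto
    (p : ℕ → ℕ) (ξ : ℕ → ℕ → ℝ)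
    (hξ0 : ∀ n, ξ n 0 = 0) (hξtop : ∀ n, ξ n (p n + 2) = 1)
    (hξmono : ∀ n k, k < p n + 2 → ξ n k ≤ ξ n (k + 1))
    (x : ℝ)
    (hx : ∀ z : ℝ → ℝ, (∃ K₁ : ℝ, ∀ w w' : ℝ, |z w - z w'| ≤ K₁ * |w - w'|) →
      (∃ K₂ : ℝ, ∀ w : ℝ, |z w| ≤ K₂ * (1 + |w|)) →
      ∃ l : ℝ, Tendsto (fun n => phiIter z x (ξ n) (p n + 2)) atTop (𝓝 l))
    (g : ℝ → ℝ) (L M : ℝ) (hL : 0 ≤ L)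
    (hLip : ∀ w w', |g w - g w'| ≤ L * |w - w'|)
    (hM : ∀ w, |g w| ≤ M) :
    ∃ l, Tendsto (fun n => sAux (ξ n) (p n) g) atTop (𝓝 l) := by
  have hM0 : 0 ≤ M := (abs_nonneg _).trans (hM 0)
  refine cauchySeq_tendsto_of_complete ?_
  rw [Metric.cauchySeq_iff']
  intro ε hε
  set lam : ℝ := min (ε / (4 * (L * M + 1))) 1 with hlamdef
  have hlam : 0 < lam := lt_min (by positivity) one_pos
  have hlam1 : lam ≤ ε / (4 * (L * M + 1)) := min_le_left _ _
  have hLMlam : L * M * lam ≤ ε / 4 := by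
    have h1 : L * M * lam ≤ L * M * (ε / (4 * (L * M + 1))) :=
      mul_le_mul_of_nonneg_left hlam1 (by positivity)
    have h4 : (0:ℝ) < 4 * (L * M + 1) := by positivity
    have h2 : L * M * (ε / (4 * (L * M + 1))) ≤ ε / 4 := by
      rw [mul_div_assoc', div_le_div_iff₀ h4 (by norm_num : (0:ℝ) < 4)]
      nlinarith
    linarith
  obtain ⟨l, hl⟩ := hx (fun w => 1 + lam * g (w - x))
    ⟨lam * L, by
      intro w w'
      have h1 : (1 + lam * g (w - x)) - (1 + lam * g (w' - x)) = lam * (g (w - x) - g (w' - x)) := by ring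
      rw [h1, abs_mul, abs_of_pos hlam]
      have h2 := hLip (w - x) (w' - x)
      have h3 : w - x - (w' - x) = w - w' := by ring
      rw [h3] at h2
      calc lam * |g (w - x) - g (w' - x)| ≤ lam * (L * |w - w'|) :=
            mul_le_mul_of_nonneg_left h2 hlam.le
        _ = lam * L * |w - w'| := by ring⟩
    ⟨1 + lam * M, by
      intro w
      have h1 : |1 + lam * g (w - x)| ≤ 1 + lam * M := by
        calc |1 + lam * g (w - x)| ≤ 1 + |lam * g (w - x)| := by
              have := abs_add_le (1:ℝ) (lam * g (w - x)); simpa using this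
          _ ≤ 1 + lam * M := by
              rw [abs_mul, abs_of_pos hlam]
              have := mul_le_mul_of_nonneg_left (hM (w - x)) hlam.le
              linarith
      calc |1 + lam * g (w - x)| ≤ 1 + lam * M := h1
        _ ≤ (1 + lam * M) * (1 + |w|) := le_mul_of_one_le_right (by positivity) (by linarith [abs_nonneg w])⟩
  have hcs := hl.cauchySeq
  rw [Metric.cauchySeq_iff'] at hcs
  obtain ⟨N, hN⟩ := hcs (lam * (ε / 8)) (by positivity)
  refine ⟨N, fun n hn => ?_⟩
  have h1 := key_est (ξ n) (p n) (hξ0 n) (hξtop n) (hξmono n) g L M lam x hL hM0 hlam hLip hM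
  have h2 := key_est (ξ N) (p N) (hξ0 N) (hξtop N) (hξmono N) g L M lam x hL hM0 hlam hLip hM
  have h3 := hN n hn
  rw [Real.dist_eq] at h3 ⊢
  set Tn := phiIter (fun w => 1 + lam * g (w - x)) x (ξ n) (p n + 2)
  set TN := phiIter (fun w => 1 + lam * g (w - x)) x (ξ N) (p N + 2)
  have hQ : |(Tn - x - 1) / lam - (TN - x - 1) / lam| = |Tn - TN| / lam := by
    rw [div_sub_div_same, abs_div, abs_of_pos hlam]
    congr 2
    ring
  have hQlt : |(Tn - x - 1) / lam - (TN - x - 1) / lam| < ε / 8 := by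
    rw [hQ, div_lt_iff₀ hlam]
    calc |Tn - TN| < lam * (ε / 8) := h3
      _ = ε / 8 * lam := by ring
  have tri : |sAux (ξ n) (p n) g - sAux (ξ N) (p N) g|
      ≤ |sAux (ξ n) (p n) g - (Tn - x - 1) / lam|
        + |(Tn - x - 1) / lam - (TN - x - 1) / lam|
        + |(TN - x - 1) / lam - sAux (ξ N) (p N) g| := by
    have := abs_sub_le (sAux (ξ n) (p n) g) ((Tn - x - 1) / lam) (sAux (ξ N) (p N) g)
    have h4 := abs_sub_le ((Tn - x - 1) / lam) ((TN - x - 1) / lam) (sAux (ξ N) (p N) g)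
    linarith
  have h2' : |(TN - x - 1) / lam - sAux (ξ N) (p N) g| ≤ L * M * lam := by
    rw [abs_sub_comm]; exact h2
  have : |sAux (ξ n) (p n) g - sAux (ξ N) (p N) g| < ε / 4 + ε / 8 + ε / 4 := by
    linarith [hLMlam]
  linarith

end Core


section MeasureSide

lemma integrable_dirac_aux {f : ℝ → ℝ} (hf : Measurable f) (a : ℝ) :
    Integrable f (Measure.dirac a) := by
  refine ⟨hf.aestronglyMeasurable, ?_⟩
  simp only [HasFiniteIntegral, lintegral_dirac]
  exact ENNReal.coe_lt_top

variable {ξ' : ℕ → ℝ} {m : ℕ}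

lemma integral_partMeasure (hmono : ∀ k, k < m + 2 → ξ' k ≤ ξ' (k + 1))
    {g : ℝ → ℝ} (hg : Measurable g) :
    ∫ w, g w ∂(partMeasure ξ' m) = sAux ξ' m g := by
  rw [partMeasure, integral_finset_sum_measure
    (fun k _ => (integrable_dirac_aux hg _).smul_measure ENNReal.ofReal_ne_top)]
  refine Finset.sum_congr rfl fun k hk => ?_
  rw [integral_smul_measure, integral_dirac,
    ENNReal.toReal_ofReal (sub_nonneg.mpr (hmono k (Finset.mem_range.mp hk))), smul_eq_mul]

lemma partMeasure_isProb (h0 : ξ' 0 = 0) (htop : ξ' (m + 2) = 1)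
    (hmono : ∀ k, k < m + 2 → ξ' k ≤ ξ' (k + 1)) :
    IsProbabilityMeasure (partMeasure ξ' m) := by
  constructor
  rw [partMeasure, Measure.finset_sum_apply]
  have : ∀ k ∈ Finset.range (m + 2),
      (ENNReal.ofReal (ξ' (k + 1) - ξ' k) • Measure.dirac (ξ' k)) Set.univ
        = ENNReal.ofReal (ξ' (k + 1) - ξ' k) := by
    intro k _
    rw [Measure.smul_apply, measure_univ, smul_eq_mul, mul_one]
  rw [Finset.sum_congr rfl this,
    ← ENNReal.ofReal_sum_of_nonneg (fun k hk => sub_nonneg.mpr (hmono k (Finset.mem_range.mp hk))),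
    sum_delta h0 htop, ENNReal.ofReal_one]

lemma partMeasure_supp (h0 : ξ' 0 = 0) (htop : ξ' (m + 2) = 1)
    (hmono : ∀ k, k < m + 2 → ξ' k ≤ ξ' (k + 1)) :
    partMeasure ξ' m (Set.Icc (0:ℝ) 1)ᶜ = 0 := by
  rw [partMeasure, Measure.finset_sum_apply]
  refine Finset.sum_eq_zero fun k hk => ?_
  have hmem := xi_mem h0 htop hmono (le_of_lt (Finset.mem_range.mp hk))
  rw [Measure.smul_apply, Measure.dirac_apply' _ measurableSet_Icc.compl,
    Set.indicator_of_notMem, smul_zero]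
  simp only [Set.mem_compl_iff, not_not, Set.mem_Icc]
  exact hmem

lemma indF_measurable (t : ℝ) : Measurable (indF t) := by
  unfold indF
  exact Measurable.ite measurableSet_Iic measurable_const measurable_const

lemma integral_indF (ν : Measure ℝ) [IsProbabilityMeasure ν] (t : ℝ) :
    ∫ w, indF t w ∂ν = (ν (Set.Iic t)).toReal := by
  have h1 : (fun w => indF t w) = (Set.Iic t).indicator (fun _ => (1:ℝ)) := by
    funext w
    simp [indF, Set.indicator_apply, Set.mem_Iic]
  rw [h1, integral_indicator_const _ measurableSet_Iic, smul_eq_mul, mul_one]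
  rfl

lemma cdf_partMeasure (h0 : ξ' 0 = 0) (htop : ξ' (m + 2) = 1)
    (hmono : ∀ k, k < m + 2 → ξ' k ≤ ξ' (k + 1)) (t : ℝ) :
    (partMeasure ξ' m (Set.Iic t)).toReal = sAux ξ' m (indF t) := by
  haveI := partMeasure_isProb h0 htop hmono
  rw [← integral_indF (partMeasure ξ' m) t, integral_partMeasure hmono (indF_measurable t)]

/-- Integration by parts representation for probability measures supported on `[0,1]`. -/
lemma repr_poly (ν : Measure ℝ) [IsProbabilityMeasure ν] (hsupp : ν (Set.Icc (0:ℝ) 1)ᶜ = 0)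
    (P : Polynomial ℝ) (Q : ℝ → ℝ) (hQc : Continuous Q)
    (hQP : ∀ t ∈ Set.Icc (-1:ℝ) 1, Q t = P.derivative.eval t) (MQ : ℝ) (hMQ : ∀ t, |Q t| ≤ MQ) :
    ∫ w, P.eval w ∂ν = P.eval 1 - ∫ t in Set.Ioc (-1:ℝ) 1, Q t * (ν (Set.Iic t)).toReal := by
  set ρ : Measure ℝ := volume.restrict (Set.Ioc (-1:ℝ) 1) with hρdef
  haveI : IsFiniteMeasure ρ := ⟨by
    rw [hρdef, Measure.restrict_apply_univ, Real.volume_Ioc]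
    exact ENNReal.ofReal_lt_top⟩
  set J : ℝ → ℝ → ℝ := fun w t => if w ≤ t then Q t else 0 with hJdef
  have hJm : StronglyMeasurable (Function.uncurry J) := by
    apply Measurable.stronglyMeasurable
    exact Measurable.ite (measurableSet_le measurable_fst measurable_snd)
      (hQc.measurable.comp measurable_snd) measurable_const
  have hMQ0 : 0 ≤ MQ := (abs_nonneg _).trans (hMQ 0)
  have hJint : Integrable (Function.uncurry J) (ν.prod ρ) := by
    refine Integrable.mono' (integrable_const MQ) hJm.aestronglyMeasurable (ae_of_all _ ?_)
    rintro ⟨w, t⟩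
    simp only [Function.uncurry, J]
    split_ifs
    · rw [Real.norm_eq_abs]; exact hMQ t
    · rw [norm_zero]; exact hMQ0
  have hswap := integral_integral_swap hJint
  have hpt : ∀ w ∈ Set.Icc (0:ℝ) 1, ∫ t, J w t ∂ρ = P.eval 1 - P.eval w := by
    intro w hw
    have hfun : (fun t => J w t) = (Set.Ici w).indicator Q := by
      funext u
      simp [J, Set.indicator_apply, Set.mem_Ici]
    rw [hfun, hρdef, integral_indicator measurableSet_Ici,
      Measure.restrict_restrict measurableSet_Ici]
    have hset : Set.Ici w ∩ Set.Ioc (-1:ℝ) 1 = Set.Icc w 1 := by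
      ext u
      simp only [Set.mem_inter_iff, Set.mem_Ici, Set.mem_Ioc, Set.mem_Icc]
      constructor
      · rintro ⟨h1, _, h3⟩; exact ⟨h1, h3⟩
      · rintro ⟨h1, h2⟩; exact ⟨h1, by linarith [hw.1], h2⟩
    rw [hset, integral_Icc_eq_integral_Ioc, ← intervalIntegral.integral_of_le hw.2]
    have hcg : ∫ t in w..1, Q t = ∫ t in w..1, P.derivative.eval t := by
      refine intervalIntegral.integral_congr fun u hu => ?_
      rw [Set.uIcc_of_le hw.2] at hu
      exact hQP u ⟨by linarith [hu.1, hw.1], hu.2⟩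
    rw [hcg, intervalIntegral.integral_deriv_eq_sub' (f' := fun u => P.derivative.eval u)
      (fun u => P.eval u) (funext fun u => P.deriv) (fun u _ => P.differentiableAt)
      (Polynomial.continuous _).continuousOn]
  have hae : ∀ᵐ w ∂ν, w ∈ Set.Icc (0:ℝ) 1 := by
    rw [ae_iff]
    convert hsupp using 2
    rfl
  have hcongr : ∫ w, P.eval w ∂ν = ∫ w, (P.eval 1 - ∫ t, J w t ∂ρ) ∂ν := by
    refine integral_congr_ae (hae.mono fun w hw => ?_)
    show P.eval w = P.eval 1 - ∫ t, J w t ∂ρ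
    rw [hpt w hw]
    ring
  have hinner_int : Integrable (fun w => ∫ t, J w t ∂ρ) ν := hJint.integral_prod_left
  rw [hcongr, integral_sub (integrable_const _) hinner_int, integral_const, probReal_univ,
    one_smul]
  congr 1
  rw [hswap]
  refine integral_congr_ae (ae_of_all _ fun t => ?_)
  show (∫ w, J w t ∂ν) = Q t * (ν (Set.Iic t)).toReal
  have hfun2 : (fun w => J w t) = (Set.Iic t).indicator (fun _ => Q t) := by
    funext w
    simp [J, Set.indicator_apply, Set.mem_Iic]
  rw [hfun2, integral_indicator_const _ measurableSet_Iic, smul_eq_mul, mul_comm]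
  rfl

end MeasureSide

end WCPM

/-- Lemma 4.2: if the terminal Euler iterates `φ^n_{p_n+2}(z,x)` converge
for every Lipschitz `z` of bounded growth, then the measures generated by the step
functions `σ^n` converge weakly. -/
theorem weak_convergence_of_partition_measures
    (p : ℕ → ℕ) (ξ : ℕ → ℕ → ℝ)
    (hξ0 : ∀ n, ξ n 0 = 0) (hξtop : ∀ n, ξ n (p n + 2) = 1)
    (hξmono : ∀ n k, k < p n + 2 → ξ n k ≤ ξ n (k + 1))
    (hconv : ∃ x : ℝ, ∀ z : ℝ → ℝ,
      (∃ K₁ : ℝ, ∀ w w' : ℝ, |z w - z w'| ≤ K₁ * |w - w'|) →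
      (∃ K₂ : ℝ, ∀ w : ℝ, |z w| ≤ K₂ * (1 + |w|)) →
      ∃ l : ℝ, Tendsto (fun n => phiIter z x (ξ n) (p n + 2)) atTop (𝓝 l)) :
    ∃ μ : Measure ℝ, IsProbabilityMeasure μ ∧
      ∀ g : ℝ → ℝ, Continuous g → (∃ C : ℝ, ∀ w, |g w| ≤ C) →
        Tendsto (fun n => ∫ w, g w ∂(partMeasure (ξ n) (p n))) atTop (𝓝 (∫ w, g w ∂μ)) := by
  obtain ⟨x, hx⟩ := hconv
  have hcore : ∀ g : ℝ → ℝ, ∀ L M : ℝ, 0 ≤ L → (∀ w w', |g w - g w'| ≤ L * |w - w'|) →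
      (∀ w, |g w| ≤ M) → ∃ l, Tendsto (fun n => WCPM.sAux (ξ n) (p n) g) atTop (𝓝 l) :=
    fun g L M hL hLip hM => WCPM.sAux_tendsto p ξ hξ0 hξtop hξmono x hx g L M hL hLip hM
  have hramp : ∀ (t : ℝ) (m : ℕ), ∃ l,
      Tendsto (fun n => WCPM.sAux (ξ n) (p n) (WCPM.rampF t (m + 1))) atTop (𝓝 l) := by
    intro t m
    refine hcore _ ((m : ℝ) + 1) 1 (by positivity) ?_ (fun w => WCPM.rampF_abs_le_one)
    intro w w'
    have h := WCPM.rampF_lip t (m + 1) w w'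
    push_cast at h
    exact h
  set c : ℝ → ℕ → ℝ := fun t m => (hramp t m).choose with hcdef
  have hc : ∀ t m, Tendsto (fun n => WCPM.sAux (ξ n) (p n) (WCPM.rampF t (m + 1))) atTop
      (𝓝 (c t m)) := fun t m => (hramp t m).choose_spec
  have hs01 : ∀ (n : ℕ) (g : ℝ → ℝ), (∀ w, 0 ≤ w → w ≤ 1 → 0 ≤ g w) →
      (∀ w, 0 ≤ w → w ≤ 1 → g w ≤ 1) →
      0 ≤ WCPM.sAux (ξ n) (p n) g ∧ WCPM.sAux (ξ n) (p n) g ≤ 1 := by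
    intro n g h0 h1
    constructor
    · have h := WCPM.sAux_mono (hξ0 n) (hξtop n) (hξmono n) (g := fun _ => (0 : ℝ)) (g' := g) h0
      rwa [WCPM.sAux_const (hξ0 n) (hξtop n)] at h
    · have h := WCPM.sAux_mono (hξ0 n) (hξtop n) (hξmono n) (g := g) (g' := fun _ => (1 : ℝ)) h1
      rwa [WCPM.sAux_const (hξ0 n) (hξtop n)] at h
  have hc_nonneg : ∀ t m, 0 ≤ c t m := fun t m =>
    ge_of_tendsto (hc t m) (Eventually.of_forall fun n =>
      (hs01 n _ (fun w _ _ => WCPM.rampF_nonneg) (fun w _ _ => WCPM.rampF_le_one)).1)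
  have hc_le_one : ∀ t m, c t m ≤ 1 := fun t m =>
    le_of_tendsto (hc t m) (Eventually.of_forall fun n =>
      (hs01 n _ (fun w _ _ => WCPM.rampF_nonneg) (fun w _ _ => WCPM.rampF_le_one)).2)
  have hc_mono : ∀ (m : ℕ) (t t' : ℝ), t ≤ t' → c t m ≤ c t' m := fun m t t' h =>
    le_of_tendsto_of_tendsto' (hc t m) (hc t' m) fun n =>
      WCPM.sAux_mono (hξ0 n) (hξtop n) (hξmono n) fun w _ _ => WCPM.rampF_mono_t h
  set F : ℝ → ℝ := fun t => ⨅ m : ℕ, c t m with hFdef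
  have hbdd : ∀ t, BddBelow (Set.range fun m => c t m) := fun t =>
    ⟨0, by rintro y ⟨m, rfl⟩; exact hc_nonneg t m⟩
  have hF_nonneg : ∀ t, 0 ≤ F t := fun t => le_ciInf fun m => hc_nonneg t m
  have hF_le_c : ∀ t m, F t ≤ c t m := fun t m => ciInf_le (hbdd t) m
  have hFmono : Monotone F := fun a b hab => le_ciInf fun m => (hF_le_c a m).trans (hc_mono m a b hab)
  have hF_one : ∀ t, (1 : ℝ) ≤ t → F t = 1 := by
    intro t ht
    have hcm : ∀ m, c t m = 1 := by
      intro m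
      refine tendsto_nhds_unique (hc t m) ?_
      have h : (fun n => WCPM.sAux (ξ n) (p n) (WCPM.rampF t (m + 1))) = fun _ => (1 : ℝ) := by
        funext n
        rw [WCPM.sAux_congr (hξ0 n) (hξtop n) (hξmono n) (g' := fun _ => (1 : ℝ))
          (fun w _ hw1 => WCPM.rampF_of_le (le_trans hw1 ht)), WCPM.sAux_const (hξ0 n) (hξtop n)]
      rw [h]
      exact tendsto_const_nhds
    have : F t = ⨅ m : ℕ, c t m := rfl
    rw [this]
    simp [hcm]
  have hF_zero : ∀ t, t < 0 → F t = 0 := by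
    intro t ht
    obtain ⟨m₀, hm₀⟩ := exists_nat_gt (1 / (-t))
    have hc0 : c t m₀ = 0 := by
      refine tendsto_nhds_unique (hc t m₀) ?_
      have hz : ∀ n, WCPM.sAux (ξ n) (p n) (WCPM.rampF t (m₀ + 1)) = 0 := by
        intro n
        rw [WCPM.sAux_congr (hξ0 n) (hξtop n) (hξmono n) (g' := fun _ => (0 : ℝ)) ?_,
          WCPM.sAux_const (hξ0 n) (hξtop n)]
        intro w hw0 _
        refine WCPM.rampF_of_ge ?_
        have h1 : 1 / (-t) < (m₀ : ℝ) + 1 := lt_of_lt_of_le hm₀ (by linarith)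
        have h2 : (1 : ℝ) < ((m₀ : ℝ) + 1) * (-t) := by
          rw [div_lt_iff₀ (by linarith : (0 : ℝ) < -t)] at h1
          linarith
        have h3 : ((m₀ : ℝ) + 1) * (-t) ≤ ((m₀ : ℝ) + 1) * (w - t) := by
          refine mul_le_mul_of_nonneg_left (by linarith) (by positivity)
        push_cast
        linarith
      simp only [hz]
      exact tendsto_const_nhds
    exact le_antisymm (hc0 ▸ hF_le_c t m₀) (hF_nonneg t)
  set Fn : ℕ → ℝ → ℝ := fun n t => WCPM.sAux (ξ n) (p n) (WCPM.indF t) with hFndef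
  have hB1 : ∀ t, ContinuousAt F t → Tendsto (fun n => Fn n t) atTop (𝓝 (F t)) := by
    intro t hcont
    rw [Metric.tendsto_atTop]
    intro ε hε
    have hlt : (⨅ m : ℕ, c t m) < F t + ε / 2 := by
      have : F t = ⨅ m : ℕ, c t m := rfl
      rw [← this]
      linarith
    obtain ⟨m₁, hm₁⟩ := exists_lt_of_ciInf_lt hlt
    have hup : ∀ᶠ n in atTop, WCPM.sAux (ξ n) (p n) (WCPM.rampF t (m₁ + 1)) < F t + ε / 2 :=
      (hc t m₁).eventually_lt_const hm₁
    obtain ⟨δ, hδpos, hδ⟩ := Metric.continuousAt_iff.1 hcont (ε / 2) (by linarith)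
    have hFs : F t - ε / 2 < F (t - δ / 2) := by
      have h1 : dist (t - δ / 2) t < δ := by
        rw [Real.dist_eq, show t - δ / 2 - t = -(δ / 2) by ring, abs_neg,
          abs_of_pos (by linarith)]
        linarith
      have h2 := hδ h1
      rw [Real.dist_eq, abs_sub_lt_iff] at h2
      linarith [h2.2]
    obtain ⟨m₂, hm₂⟩ := exists_nat_one_div_lt (show (0 : ℝ) < δ / 2 by linarith)
    have hle : ∀ n, WCPM.sAux (ξ n) (p n) (WCPM.rampF (t - δ / 2) (m₂ + 1)) ≤ Fn n t := by
      intro n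
      refine WCPM.sAux_mono (hξ0 n) (hξtop n) (hξmono n) fun w _ _ => ?_
      refine WCPM.rampF_le_indF ?_
      linarith
    have hlow : ∀ᶠ n in atTop,
        F t - ε < WCPM.sAux (ξ n) (p n) (WCPM.rampF (t - δ / 2) (m₂ + 1)) := by
      refine (hc (t - δ / 2) m₂).eventually_const_lt ?_
      have := hF_le_c (t - δ / 2) m₂
      linarith
    obtain ⟨N, hN⟩ := eventually_atTop.1 (hup.and hlow)
    refine ⟨N, fun n hn => ?_⟩
    obtain ⟨h1, h2⟩ := hN n hn
    have hFn_le : Fn n t ≤ WCPM.sAux (ξ n) (p n) (WCPM.rampF t (m₁ + 1)) :=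
      WCPM.sAux_mono (hξ0 n) (hξtop n) (hξmono n) fun w _ _ => WCPM.indF_le_rampF
    rw [Real.dist_eq, abs_sub_lt_iff]
    exact ⟨by linarith, by linarith [hle n]⟩
  -- the limit measure
  set G := hFmono.stieltjesFunction with hGdef
  have hGax : ∀ t, G t = Function.rightLim F t := fun t => hFmono.stieltjesFunction_eq t
  have hGzero : ∀ t, t < 0 → G t = 0 := by
    intro t ht
    rw [hGax]
    refine le_antisymm ?_ ?_
    · have h := hFmono.rightLim_le (show t < t / 2 by linarith)
      rwa [hF_zero (t / 2) (by linarith)] at h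
    · have h := hFmono.le_rightLim (le_refl t)
      rwa [hF_zero t ht] at h
  have hGone : ∀ t, (1 : ℝ) ≤ t → G t = 1 := by
    intro t ht
    rw [hGax]
    refine le_antisymm ?_ ?_
    · have h := hFmono.rightLim_le (lt_add_one t)
      rwa [hF_one (t + 1) (by linarith)] at h
    · have h := hFmono.le_rightLim (le_refl t)
      rwa [hF_one t ht] at h
  have hGbot : Tendsto (fun t => G t) atBot (𝓝 0) := by
    have h : (fun _ : ℝ => (0 : ℝ)) =ᶠ[atBot] fun t => G t := by
      filter_upwards [Iio_mem_atBot (0 : ℝ)] with t ht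
      exact (hGzero t ht).symm
    exact tendsto_const_nhds.congr' h
  have hGtop : Tendsto (fun t => G t) atTop (𝓝 1) := by
    have h : (fun _ : ℝ => (1 : ℝ)) =ᶠ[atTop] fun t => G t := by
      filter_upwards [Ici_mem_atTop (1 : ℝ)] with t ht
      exact (hGone t ht).symm
    exact tendsto_const_nhds.congr' h
  set μ := G.measure with hμdef
  haveI hμprob : IsProbabilityMeasure μ := G.isProbabilityMeasure hGbot hGtop
  have hμIic : ∀ t, μ (Set.Iic t) = ENNReal.ofReal (G t) := by
    intro t
    rw [hμdef, G.measure_Iic hGbot, sub_zero]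
  have hμsupp : μ (Set.Icc (0 : ℝ) 1)ᶜ = 0 := by
    have h1 : μ (Set.Iio 0) = 0 := by
      have hsub : Set.Iio (0 : ℝ) ⊆ ⋃ n : ℕ, Set.Iic (-(1 / ((n : ℝ) + 1))) := by
        intro w hw
        simp only [Set.mem_Iio] at hw
        obtain ⟨n, hn⟩ := exists_nat_one_div_lt (show (0 : ℝ) < -w by linarith)
        refine Set.mem_iUnion.mpr ⟨n, ?_⟩
        simp only [Set.mem_Iic]
        linarith
      refine le_antisymm (le_trans (measure_mono hsub) ?_) zero_le
      refine le_trans (measure_iUnion_le _) ?_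
      have hz : ∀ n : ℕ, μ (Set.Iic (-(1 / ((n : ℝ) + 1)))) = 0 := by
        intro n
        have hneg : -(1 / ((n : ℝ) + 1)) < 0 := by
          have : (0 : ℝ) < 1 / ((n : ℝ) + 1) := by positivity
          linarith
        rw [hμIic, hGzero _ hneg, ENNReal.ofReal_zero]
      refine le_of_eq ?_
      simp only [hz, tsum_zero]
    have h2 : μ (Set.Ioi 1) = 0 := by
      have he : Set.Ioi (1 : ℝ) = (Set.Iic 1)ᶜ := (Set.compl_Iic).symm
      rw [he, measure_compl measurableSet_Iic (measure_ne_top μ _), hμIic, hGone 1 le_rfl,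
        measure_univ, ENNReal.ofReal_one, tsub_self]
    have hsub2 : (Set.Icc (0 : ℝ) 1)ᶜ ⊆ Set.Iio 0 ∪ Set.Ioi 1 := by
      intro w hw
      simp only [Set.mem_compl_iff, Set.mem_Icc, not_and_or, not_le] at hw
      simp only [Set.mem_union, Set.mem_Iio, Set.mem_Ioi]
      exact hw
    refine le_antisymm (le_trans (measure_mono hsub2) ?_) zero_le
    calc μ (Set.Iio 0 ∪ Set.Ioi 1) ≤ μ (Set.Iio 0) + μ (Set.Ioi 1) := measure_union_le _ _
      _ = 0 := by rw [h1, h2, add_zero]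
  have hcdfμ : ∀ t, ContinuousAt F t → (μ (Set.Iic t)).toReal = F t := by
    intro t hcont
    have hGF : G t = F t := by
      rw [hGax]
      exact rightLim_eq_of_tendsto
        (hcont.tendsto.mono_left nhdsWithin_le_nhds)
    rw [hμIic, hGF, ENNReal.toReal_ofReal (hF_nonneg t)]
  -- convergence of polynomial integrals
  have hpoly : ∀ P : Polynomial ℝ,
      Tendsto (fun n => ∫ w, P.eval w ∂(partMeasure (ξ n) (p n))) atTop
        (𝓝 (∫ w, P.eval w ∂μ)) := by
    intro P
    set Qc : ℝ → ℝ := fun u => P.derivative.eval (max (-1) (min 1 u)) with hQcdef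
    have hQccont : Continuous Qc :=
      (Polynomial.continuous _).comp (continuous_const.max (continuous_const.min continuous_id))
    obtain ⟨z0, _, hz0'⟩ := (isCompact_Icc (a := (-1 : ℝ)) (b := 1)).exists_isMaxOn
      ⟨-1, Set.left_mem_Icc.mpr (by norm_num)⟩
      ((continuous_abs.comp (Polynomial.continuous P.derivative)).continuousOn)
    have hz0 := isMaxOn_iff.mp hz0'
    set MQ := |P.derivative.eval z0| with hMQdef
    have hclampmem : ∀ u : ℝ, max (-1) (min 1 u) ∈ Set.Icc (-1 : ℝ) 1 :=
      fun u => ⟨le_max_left _ _, max_le (by norm_num) (min_le_left _ _)⟩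
    have hMQ : ∀ u, |Qc u| ≤ MQ := fun u => hz0 _ (hclampmem u)
    have hQP : ∀ u ∈ Set.Icc (-1 : ℝ) 1, Qc u = P.derivative.eval u := by
      intro u hu
      show P.derivative.eval (max (-1) (min 1 u)) = P.derivative.eval u
      rw [min_eq_right hu.2, max_eq_right hu.1]
    have hrn : ∀ n, ∫ w, P.eval w ∂(partMeasure (ξ n) (p n))
        = P.eval 1 - ∫ t in Set.Ioc (-1 : ℝ) 1,
            Qc t * ((partMeasure (ξ n) (p n)) (Set.Iic t)).toReal := by
      intro n
      haveI := WCPM.partMeasure_isProb (hξ0 n) (hξtop n) (hξmono n)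
      exact WCPM.repr_poly _ (WCPM.partMeasure_supp (hξ0 n) (hξtop n) (hξmono n)) P Qc hQccont
        hQP MQ hMQ
    have hrμ : ∫ w, P.eval w ∂μ
        = P.eval 1 - ∫ t in Set.Ioc (-1 : ℝ) 1, Qc t * (μ (Set.Iic t)).toReal :=
      WCPM.repr_poly μ hμsupp P Qc hQccont hQP MQ hMQ
    have hMQ0 : 0 ≤ MQ := abs_nonneg _
    have hDCT : Tendsto
        (fun n => ∫ t in Set.Ioc (-1 : ℝ) 1,
          Qc t * ((partMeasure (ξ n) (p n)) (Set.Iic t)).toReal) atTop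
        (𝓝 (∫ t in Set.Ioc (-1 : ℝ) 1, Qc t * (μ (Set.Iic t)).toReal)) := by
      refine tendsto_integral_of_dominated_convergence (fun _ => MQ) ?_ (integrable_const MQ)
        ?_ ?_
      · intro n
        haveI := WCPM.partMeasure_isProb (hξ0 n) (hξtop n) (hξmono n)
        have hcdfmono : Monotone (fun t => ((partMeasure (ξ n) (p n)) (Set.Iic t)).toReal) :=
          fun a b hab => ENNReal.toReal_mono (measure_ne_top _ _)
            (measure_mono (Set.Iic_subset_Iic.mpr hab))
        exact (hQccont.measurable.mul hcdfmono.measurable).aestronglyMeasurable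
      · intro n
        refine Eventually.of_forall fun t => ?_
        haveI := WCPM.partMeasure_isProb (hξ0 n) (hξtop n) (hξmono n)
        rw [Real.norm_eq_abs, abs_mul, abs_of_nonneg (ENNReal.toReal_nonneg (a := (partMeasure (ξ n) (p n)) (Set.Iic t)))]
        have h1 : ((partMeasure (ξ n) (p n)) (Set.Iic t)).toReal ≤ 1 := by
          have hle := prob_le_one (μ := partMeasure (ξ n) (p n)) (s := Set.Iic t)
          simpa using ENNReal.toReal_mono ENNReal.one_ne_top hle
        calc |Qc t| * ((partMeasure (ξ n) (p n)) (Set.Iic t)).toReal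
            ≤ MQ * 1 := mul_le_mul (hMQ t) h1 ENNReal.toReal_nonneg hMQ0
          _ = MQ := mul_one MQ
      · have hcnt : Set.Countable {t : ℝ | ¬ContinuousAt F t} :=
          hFmono.countable_not_continuousAt
        have hbadnull : volume (insert (0 : ℝ) {t : ℝ | ¬ContinuousAt F t}) = 0 :=
          (hcnt.insert 0).measure_zero _
        have hb : ∀ᵐ t ∂(volume.restrict (Set.Ioc (-1 : ℝ) 1)),
            t ∉ insert (0 : ℝ) {t : ℝ | ¬ContinuousAt F t} :=
          ae_restrict_of_ae (measure_eq_zero_iff_ae_notMem.mp hbadnull)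
        filter_upwards [hb] with t ht
        simp only [Set.mem_insert_iff, not_or] at ht
        obtain ⟨ht0, htc⟩ := ht
        have htc' : ContinuousAt F t := not_not.mp (by simpa using htc)
        rcases lt_or_gt_of_ne ht0 with htneg | htpos
        · have hz : ∀ n, ((partMeasure (ξ n) (p n)) (Set.Iic t)).toReal = 0 := by
            intro n
            have hsub : Set.Iic t ⊆ (Set.Icc (0 : ℝ) 1)ᶜ := by
              intro w hw
              simp only [Set.mem_Iic] at hw
              simp only [Set.mem_compl_iff, Set.mem_Icc, not_and_or, not_le]
              exact Or.inl (by linarith)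
            have hm := measure_mono (μ := partMeasure (ξ n) (p n)) hsub
            rw [WCPM.partMeasure_supp (hξ0 n) (hξtop n) (hξmono n)] at hm
            rw [le_antisymm hm zero_le]
            simp
          have hzμ : (μ (Set.Iic t)).toReal = 0 := by
            rw [hμIic, hGzero t htneg, ENNReal.ofReal_zero, ENNReal.toReal_zero]
          simp only [hz, hzμ, mul_zero]
          exact tendsto_const_nhds
        · have hEq : ∀ n, ((partMeasure (ξ n) (p n)) (Set.Iic t)).toReal = Fn n t := fun n =>
            WCPM.cdf_partMeasure (hξ0 n) (hξtop n) (hξmono n) t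
          have hT := (hB1 t htc').const_mul (Qc t)
          rw [hcdfμ t htc']
          simp only [hEq]
          exact hT
    rw [hrμ]
    have hfeq : (fun n => ∫ w, P.eval w ∂(partMeasure (ξ n) (p n)))
        = fun n => P.eval 1 - ∫ t in Set.Ioc (-1 : ℝ) 1,
            Qc t * ((partMeasure (ξ n) (p n)) (Set.Iic t)).toReal := funext hrn
    rw [hfeq]
    exact tendsto_const_nhds.sub hDCT
  -- final assembly
  refine ⟨μ, hμprob, ?_⟩
  rintro g hgcont ⟨C, hC⟩
  rw [Metric.tendsto_atTop]
  intro ε hε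
  obtain ⟨P, hP⟩ := exists_polynomial_near_of_continuousOn 0 1 g hgcont.continuousOn (ε / 4)
    (by linarith)
  have happrox : ∀ ν : Measure ℝ, IsProbabilityMeasure ν → ν (Set.Icc (0 : ℝ) 1)ᶜ = 0 →
      |(∫ w, g w ∂ν) - ∫ w, P.eval w ∂ν| ≤ ε / 4 := by
    intro ν hprob hsupp
    haveI := hprob
    have hae : ∀ᵐ w ∂ν, w ∈ Set.Icc (0 : ℝ) 1 := by
      rw [ae_iff]
      convert hsupp using 2
      rfl
    obtain ⟨zP, _, hzP'⟩ := (isCompact_Icc (a := (0 : ℝ)) (b := 1)).exists_isMaxOn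
      ⟨0, Set.left_mem_Icc.mpr (by norm_num)⟩
      ((continuous_abs.comp (Polynomial.continuous P)).continuousOn)
    have hzP := isMaxOn_iff.mp hzP'
    have hgint : Integrable g ν := by
      refine (integrable_const C).mono' hgcont.aestronglyMeasurable (ae_of_all _ fun w => ?_)
      rw [Real.norm_eq_abs]
      exact hC w
    have hPint : Integrable (fun w => P.eval w) ν := by
      refine (integrable_const (|P.eval zP|)).mono' (Polynomial.continuous P).aestronglyMeasurable
        (hae.mono fun w hw => ?_)
      rw [Real.norm_eq_abs]
      exact hzP w hw
    rw [← integral_sub hgint hPint]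
    have hb := norm_integral_le_of_norm_le (μ := ν) (f := fun w => g w - P.eval w)
      (integrable_const (ε / 4)) (hae.mono fun w hw => by
        rw [Real.norm_eq_abs, abs_sub_comm]
        exact (hP w hw).le)
    rw [integral_const, probReal_univ, one_smul, Real.norm_eq_abs] at hb
    exact hb
  have hμ4 := happrox μ hμprob hμsupp
  have hPconv := hpoly P
  rw [Metric.tendsto_atTop] at hPconv
  obtain ⟨N, hN⟩ := hPconv (ε / 4) (by linarith)
  refine ⟨N, fun n hn => ?_⟩
  have hn4 := happrox (partMeasure (ξ n) (p n))
    (WCPM.partMeasure_isProb (hξ0 n) (hξtop n) (hξmono n))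
    (WCPM.partMeasure_supp (hξ0 n) (hξtop n) (hξmono n))
  have h5 := hN n hn
  rw [Real.dist_eq] at h5 ⊢
  have tri := abs_sub_le (∫ w, g w ∂(partMeasure (ξ n) (p n)))
    (∫ w, P.eval w ∂(partMeasure (ξ n) (p n))) (∫ w, g w ∂μ)
  have tri2 := abs_sub_le (∫ w, P.eval w ∂(partMeasure (ξ n) (p n))) (∫ w, P.eval w ∂μ)
    (∫ w, g w ∂μ)
  have h6 : |(∫ w, P.eval w ∂μ) - ∫ w, g w ∂μ| ≤ ε / 4 := by
    rw [abs_sub_comm]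
    exact hμ4
  linarith
end
end

section
/- Suppose there exists x ∈ ℝ such that for every q, ε ∈ ℚ with ε > 0 the real sequence of terminal values φ_{p_n+2}^n(z_{q,ε}, x) converges as n → ∞, where z_{q,ε}(p) = 1 for p ≤ x+q, z_{q,ε}(p) = (x+q+ε−p)/ε for x+q < p ≤ x+q+ε, and z_{q,ε}(p) = 0 for p > x+q+ε. Then the sequence (μ^n) of probability measures on [0,1] generated by the functions σ^n converges weakly. -/
open MeasureTheory Filter Set Topology

noncomputable section

namespace SPaux

/-- The "CDF" of the partition measure. -/
def Fpart (ξ : ℕ → ℝ) (m : ℕ) (t : ℝ) : ℝ :=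
  ∑ k ∈ Finset.range (m + 2), if ξ k ≤ t then ξ (k + 1) - ξ k else 0

variable {ξ : ℕ → ℝ} {m : ℕ}

lemma xi_mono (hmono : ∀ k, k < m + 2 → ξ k ≤ ξ (k + 1)) :
    ∀ {j k : ℕ}, j ≤ k → k ≤ m + 2 → ξ j ≤ ξ k := by
  intro j k hjk hk
  induction k with
  | zero =>
    have : j = 0 := by omega
    subst this; exact le_rfl
  | succ k ih =>
    rcases Nat.lt_or_ge j (k + 1) with h | h
    · exact le_trans (ih (by omega) (by omega)) (hmono k (by omega))
    · have : j = k + 1 := by omega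
      subst this; exact le_rfl

lemma xi_nonneg (hmono : ∀ k, k < m + 2 → ξ k ≤ ξ (k + 1)) (h0 : ξ 0 = 0)
    {k : ℕ} (hk : k ≤ m + 2) : 0 ≤ ξ k := by
  have := xi_mono hmono (Nat.zero_le k) hk; rw [h0] at this; exact this

lemma xi_le_one (hmono : ∀ k, k < m + 2 → ξ k ≤ ξ (k + 1)) (htop : ξ (m + 2) = 1)
    {k : ℕ} (hk : k ≤ m + 2) : ξ k ≤ 1 := by
  have := xi_mono hmono hk le_rfl; rw [htop] at this; exact this

lemma Fpart_nonneg (hmono : ∀ k, k < m + 2 → ξ k ≤ ξ (k + 1)) (t : ℝ) :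
    0 ≤ Fpart ξ m t := by
  apply Finset.sum_nonneg
  intro k hk
  rw [Finset.mem_range] at hk
  split
  · have := hmono k hk; linarith
  · exact le_rfl

lemma Fpart_le_one (hmono : ∀ k, k < m + 2 → ξ k ≤ ξ (k + 1)) (h0 : ξ 0 = 0)
    (htop : ξ (m + 2) = 1) (t : ℝ) : Fpart ξ m t ≤ 1 := by
  have : Fpart ξ m t ≤ ∑ k ∈ Finset.range (m + 2), (ξ (k + 1) - ξ k) := by
    apply Finset.sum_le_sum
    intro k hk
    rw [Finset.mem_range] at hk
    split
    · exact le_rfl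
    · have := hmono k hk; linarith
  rwa [Finset.sum_range_sub, htop, h0, sub_zero] at this

lemma Fpart_mono (hmono : ∀ k, k < m + 2 → ξ k ≤ ξ (k + 1)) {t t' : ℝ} (h : t ≤ t') :
    Fpart ξ m t ≤ Fpart ξ m t' := by
  apply Finset.sum_le_sum
  intro k hk
  rw [Finset.mem_range] at hk
  by_cases hc : ξ k ≤ t
  · rw [if_pos hc, if_pos (le_trans hc h)]
  · rw [if_neg hc]
    split
    · have := hmono k hk; linarith
    · exact le_rfl

lemma Fpart_of_neg (hmono : ∀ k, k < m + 2 → ξ k ≤ ξ (k + 1)) (h0 : ξ 0 = 0)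
    {t : ℝ} (ht : t < 0) : Fpart ξ m t = 0 := by
  apply Finset.sum_eq_zero
  intro k hk
  rw [Finset.mem_range] at hk
  rw [if_neg]
  intro hc
  have := xi_nonneg hmono h0 (k := k) (by omega)
  linarith

lemma Fpart_of_ge_one (hmono : ∀ k, k < m + 2 → ξ k ≤ ξ (k + 1)) (h0 : ξ 0 = 0)
    (htop : ξ (m + 2) = 1) {t : ℝ} (ht : 1 ≤ t) : Fpart ξ m t = 1 := by
  have : Fpart ξ m t = ∑ k ∈ Finset.range (m + 2), (ξ (k + 1) - ξ k) := by
    apply Finset.sum_congr rfl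
    intro k hk
    rw [Finset.mem_range] at hk
    rw [if_pos (le_trans (xi_le_one hmono htop (by omega)) ht)]
  rw [this, Finset.sum_range_sub, htop, h0, sub_zero]

lemma Fpart_eq_K (hmono : ∀ k, k < m + 2 → ξ k ≤ ξ (k + 1)) (h0 : ξ 0 = 0)
    (htop : ξ (m + 2) = 1) {t : ℝ} (ht : t < 1) :
    ∃ K, K ≤ m + 2 ∧ t < ξ K ∧ (∀ j, j < K → ξ j ≤ t) ∧ Fpart ξ m t = ξ K := by
  classical
  have hex : ∃ k, k ≤ m + 2 ∧ t < ξ k := ⟨m + 2, le_rfl, by rw [htop]; exact ht⟩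
  set K := Nat.find hex with hKdef
  obtain ⟨hKle, hKt⟩ := Nat.find_spec hex
  have hjlt : ∀ j, j < K → ξ j ≤ t := by
    intro j hj
    have h := Nat.find_min hex hj
    push_neg at h
    exact h (by omega)
  refine ⟨K, hKle, hKt, hjlt, ?_⟩
  have h1 : Fpart ξ m t = ∑ k ∈ Finset.range (m + 2), if k < K then ξ (k + 1) - ξ k else 0 := by
    apply Finset.sum_congr rfl
    intro k hk
    rw [Finset.mem_range] at hk
    by_cases hc : k < K
    · rw [if_pos (hjlt k hc), if_pos hc]
    · rw [if_neg hc, if_neg]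
      push_neg at hc
      have := xi_mono hmono hc (by omega)
      intro hcon; linarith
  have h2 : (∑ k ∈ Finset.range (m + 2), if k < K then ξ (k + 1) - ξ k else 0)
      = ∑ k ∈ Finset.range K, (ξ (k + 1) - ξ k) := by
    rw [← Finset.sum_filter]
    apply Finset.sum_congr
    · ext k
      simp only [Finset.mem_filter, Finset.mem_range]
      omega
    · intro _ _; rfl
  rw [h1, h2, Finset.sum_range_sub, h0, sub_zero]

section zlem
variable {x q ε : ℝ}

lemma zqe_nonneg (hε : 0 < ε) (p : ℝ) : 0 ≤ zqe x q ε p := by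
  unfold zqe
  split_ifs with h1 h2
  · norm_num
  · apply div_nonneg (by linarith) hε.le
  · exact le_rfl

lemma zqe_le_one (hε : 0 < ε) (p : ℝ) : zqe x q ε p ≤ 1 := by
  unfold zqe
  split_ifs with h1 h2
  · exact le_rfl
  · rw [div_le_one hε]; push_neg at h1; linarith
  · norm_num

lemma zqe_eq_one {p : ℝ} (h : p ≤ x + q) : zqe x q ε p = 1 := by
  unfold zqe; rw [if_pos h]

lemma zqe_eq_zero (hε : 0 < ε) {p : ℝ} (h : x + q + ε < p) : zqe x q ε p = 0 := by
  unfold zqe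
  rw [if_neg (by linarith), if_neg (by linarith)]

lemma zqe_ramp {p : ℝ} (h1 : ¬ p ≤ x + q) (h2 : p ≤ x + q + ε) :
    zqe x q ε p = (x + q + ε - p) / ε := by
  unfold zqe; rw [if_neg h1, if_pos h2]

lemma zqe_anti (hε : 0 < ε) {p p' : ℝ} (h : p ≤ p') : zqe x q ε p' ≤ zqe x q ε p := by
  rcases le_or_gt p' (x + q) with a | a
  · rw [zqe_eq_one (le_trans h a), zqe_eq_one a]
  · rcases le_or_gt p' (x + q + ε) with b | b
    · rw [zqe_ramp (not_le.2 a) b]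
      rcases le_or_gt p (x + q) with c | c
      · rw [zqe_eq_one c, div_le_one hε]; linarith
      · rw [zqe_ramp (not_le.2 c) (le_trans h b)]
        have hnum : x + q + ε - p' ≤ x + q + ε - p := by linarith
        gcongr
    · rw [zqe_eq_zero hε b]
      exact zqe_nonneg hε p

end zlem

section philem

variable {ξ : ℕ → ℝ} {m : ℕ} {x q ε : ℝ}

lemma phi_succ (z : ℝ → ℝ) (k : ℕ) :
    phiIter z x ξ (k + 1) = phiIter z x ξ k + z (phiIter z x ξ k) * (ξ (k + 1) - ξ k) := rfl

lemma phi_mono (hmono : ∀ k, k < m + 2 → ξ k ≤ ξ (k + 1)) (hε : 0 < ε) :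
    ∀ {j k : ℕ}, j ≤ k → k ≤ m + 2 → phiIter (zqe x q ε) x ξ j ≤ phiIter (zqe x q ε) x ξ k := by
  intro j k hjk hk
  induction k with
  | zero =>
    have : j = 0 := by omega
    subst this; exact le_rfl
  | succ k ih =>
    rcases Nat.lt_or_ge j (k + 1) with h | h
    · refine le_trans (ih (by omega) (by omega)) ?_
      rw [phi_succ]
      have h1 : 0 ≤ zqe x q ε (phiIter (zqe x q ε) x ξ k) := zqe_nonneg hε _
      have h2 : 0 ≤ ξ (k + 1) - ξ k := by have := hmono k (by omega); linarith
      nlinarith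
    · have : j = k + 1 := by omega
      subst this; exact le_rfl

lemma phi_nonneg_incr (hmono : ∀ k, k < m + 2 → ξ k ≤ ξ (k + 1)) (hε : 0 < ε)
    {k : ℕ} (hk : k ≤ m + 2) : x ≤ phiIter (zqe x q ε) x ξ k :=
  phi_mono hmono hε (Nat.zero_le k) hk

lemma phi_le (hmono : ∀ k, k < m + 2 → ξ k ≤ ξ (k + 1)) (h0 : ξ 0 = 0) (hε : 0 < ε) :
    ∀ {k : ℕ}, k ≤ m + 2 → phiIter (zqe x q ε) x ξ k ≤ x + ξ k := by
  intro k hk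
  induction k with
  | zero => simp [phiIter, h0]
  | succ k ih =>
    rw [phi_succ]
    have h2 : 0 ≤ ξ (k + 1) - ξ k := by have := hmono k (by omega); linarith
    have h3 : zqe x q ε (phiIter (zqe x q ε) x ξ k) * (ξ (k + 1) - ξ k) ≤ 1 * (ξ (k + 1) - ξ k) :=
      mul_le_mul_of_nonneg_right (zqe_le_one hε _) h2
    have h4 := ih (by omega)
    linarith

lemma phi_track (hmono : ∀ k, k < m + 2 → ξ k ≤ ξ (k + 1)) (h0 : ξ 0 = 0) (hε : 0 < ε) :
    ∀ {k : ℕ}, k ≤ m + 2 → (∀ j, j < k → ξ j ≤ q) → phiIter (zqe x q ε) x ξ k = x + ξ k := by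
  intro k hk hq
  induction k with
  | zero => simp [phiIter, h0]
  | succ k ih =>
    rw [phi_succ, ih (by omega) (fun j hj => hq j (by omega)),
      zqe_eq_one (by have := hq k (by omega); linarith)]
    ring

lemma phi_telescope (z : ℝ → ℝ) {a b : ℕ} (hab : a ≤ b) :
    phiIter z x ξ b = phiIter z x ξ a
      + ∑ k ∈ Finset.Ico a b, z (phiIter z x ξ k) * (ξ (k + 1) - ξ k) := by
  induction b, hab using Nat.le_induction with
  | base => simp
  | succ b hab ih =>
    rw [Finset.sum_Ico_succ_top hab, phi_succ, ih]
    ring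

lemma phi_frozen (hε : 0 < ε) {a : ℕ} (ha : x + q + ε < phiIter (zqe x q ε) x ξ a) :
    ∀ {k : ℕ}, a ≤ k → phiIter (zqe x q ε) x ξ k = phiIter (zqe x q ε) x ξ a := by
  intro k hak
  induction k, hak using Nat.le_induction with
  | base => rfl
  | succ k hak ih =>
    rw [phi_succ, ih, zqe_eq_zero hε (by linarith), zero_mul, add_zero]

/-- Lower bound: terminal value dominates the partition CDF at `q`. -/
lemma terminal_lower (hmono : ∀ k, k < m + 2 → ξ k ≤ ξ (k + 1)) (h0 : ξ 0 = 0)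
    (htop : ξ (m + 2) = 1) (hε : 0 < ε) :
    Fpart ξ m q ≤ phiIter (zqe x q ε) x ξ (m + 2) - x := by
  rcases lt_or_ge q 1 with hq | hq
  · obtain ⟨K, hK, hKq, hKj, hFe⟩ := Fpart_eq_K hmono h0 htop hq
    have htr : phiIter (zqe x q ε) x ξ K = x + ξ K := phi_track hmono h0 hε hK hKj
    have hm := phi_mono (x := x) (q := q) (ε := ε) hmono hε hK le_rfl
    rw [hFe]; linarith
  · rw [Fpart_of_ge_one hmono h0 htop hq]
    have htr : phiIter (zqe x q ε) x ξ (m + 2) = x + ξ (m + 2) :=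
      phi_track hmono h0 hε le_rfl
        (fun j hj => le_trans (xi_le_one hmono htop (by omega)) hq)
    rw [htr, htop]; linarith

set_option maxHeartbeats 1000000 in
/-- Upper bound: terminal value is dominated by the partition CDF slightly to the right. -/
lemma terminal_upper (hmono : ∀ k, k < m + 2 → ξ k ≤ ξ (k + 1)) (h0 : ξ 0 = 0)
    (htop : ξ (m + 2) = 1) (hε : 0 < ε) {α : ℝ} (hα : 0 < α) :
    phiIter (zqe x q ε) x ξ (m + 2) ≤ x + ε + α + Fpart ξ m (q + ε + ε / α) := by
  set φ := phiIter (zqe x q ε) x ξ with hφdef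
  set s : ℝ := q + ε + ε / α with hsdef
  have hεα : 0 < ε / α := div_pos hε hα
  have hqs : q < s := by simp only [hsdef]; linarith
  have hφle : ∀ {k : ℕ}, k ≤ m + 2 → φ k ≤ x + ξ k := fun hk => phi_le hmono h0 hε hk
  have hFnn : 0 ≤ Fpart ξ m s := Fpart_nonneg hmono s
  rcases le_or_gt 1 s with hs | hs
  · rw [Fpart_of_ge_one hmono h0 htop hs]
    have := hφle (le_refl (m + 2))
    rw [htop] at this
    linarith
  -- s < 1
  obtain ⟨M, hM, hMs, hMj, hFs⟩ := Fpart_eq_K hmono h0 htop hs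
  rcases lt_or_ge (x + q + ε) x with hxq | hxq
  · -- frozen from the start
    have h00 : φ 0 = x := rfl
    have : φ (m + 2) = φ 0 := phi_frozen hε (a := 0) (by show x + q + ε < φ 0; rw [h00]; exact hxq) (Nat.zero_le _)
    rw [this, h00]
    linarith
  rcases le_or_gt (φ (m + 2)) (x + q + ε) with hT | hT
  · have : q ≤ ξ M := le_of_lt (lt_of_lt_of_le hqs (le_of_lt hMs))
    rw [hFs]; linarith
  -- the trajectory crosses the level x+q+ε
  have hex : ∃ k, x + q + ε < φ (k + 1) := ⟨m + 1, hT⟩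
  classical
  set k₁ := Nat.find hex with hk₁def
  have h1 : x + q + ε < φ (k₁ + 1) := Nat.find_spec hex
  have hk₁le : k₁ ≤ m + 1 := Nat.find_min' hex hT
  have h2 : ∀ j, j ≤ k₁ → φ j ≤ x + q + ε := by
    intro j hj
    match j, hj with
    | 0, _ => exact hxq
    | (i+1), hj => exact le_of_not_gt (Nat.find_min hex (by omega))
  have hfro : φ (m + 2) = φ (k₁ + 1) := phi_frozen hε h1 (by omega)
  have hstep : φ (k₁ + 1) = φ k₁ + zqe x q ε (φ k₁) * (ξ (k₁ + 1) - ξ k₁) := phi_succ _ _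
  set O : ℝ := φ (k₁ + 1) - (x + q + ε) with hOdef
  have hOpos : 0 < O := by simp only [hOdef]; linarith
  have hzΔ : O ≤ zqe x q ε (φ k₁) * (ξ (k₁ + 1) - ξ k₁) := by
    have := h2 k₁ le_rfl
    simp only [hOdef, hstep]; linarith
  rcases le_or_gt O α with hOα | hOα
  · have hqM : q ≤ ξ M := le_of_lt (lt_of_lt_of_le hqs (le_of_lt hMs))
    rw [hFs, hfro]
    simp only [hOdef] at hOα
    linarith
  -- big overshoot: locate a big atom not too far to the right of q
  have hΔ1 : ξ (k₁ + 1) - ξ k₁ ≤ 1 := by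
    have ha := xi_le_one hmono htop (k := k₁ + 1) (by omega)
    have hb := xi_nonneg hmono h0 (k := k₁) (by omega)
    linarith
  have hz₁ : α < zqe x q ε (φ k₁) := by
    have hzn : 0 ≤ zqe x q ε (φ k₁) := zqe_nonneg hε _
    nlinarith
  have hξk₁ : ξ k₁ ≤ s := by
    have hq1 : q < 1 := lt_trans hqs hs
    obtain ⟨K, hK, hKq, hKj, hFq⟩ := Fpart_eq_K hmono h0 htop hq1
    rcases Nat.lt_or_ge k₁ K with hKk | hKk
    · exact le_trans (hKj k₁ hKk) (le_of_lt hqs)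
    · have hφK : φ K = x + ξ K := phi_track hmono h0 hε hK hKj
      have hφKk₁ : φ K ≤ φ k₁ := phi_mono hmono hε hKk (by omega)
      have hξKqε : ξ K ≤ q + ε := by
        have := h2 k₁ le_rfl
        rw [hφK] at hφKk₁; linarith
      have htel : φ k₁ = φ K + ∑ k ∈ Finset.Ico K k₁,
          zqe x q ε (φ k) * (ξ (k + 1) - ξ k) := phi_telescope _ hKk
      have hsum : ∑ k ∈ Finset.Ico K k₁, α * (ξ (k + 1) - ξ k)
          ≤ ∑ k ∈ Finset.Ico K k₁, zqe x q ε (φ k) * (ξ (k + 1) - ξ k) := by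
        apply Finset.sum_le_sum
        intro j hj
        rw [Finset.mem_Ico] at hj
        have hφj : φ j ≤ φ k₁ := phi_mono hmono hε (by omega) (by omega)
        have hzj : zqe x q ε (φ k₁) ≤ zqe x q ε (φ j) := zqe_anti hε hφj
        have hΔj : 0 ≤ ξ (j + 1) - ξ j := by have := hmono j (by omega); linarith
        nlinarith
      have hsumΔ : ∑ k ∈ Finset.Ico K k₁, (ξ (k + 1) - ξ k) = ξ k₁ - ξ K := by
        rw [Finset.sum_Ico_eq_sub _ hKk, Finset.sum_range_sub, Finset.sum_range_sub]
        ring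
      have hmul : ∑ k ∈ Finset.Ico K k₁, α * (ξ (k + 1) - ξ k) = α * (ξ k₁ - ξ K) := by
        rw [← Finset.mul_sum, hsumΔ]
      have hφk₁ : φ k₁ ≤ x + q + ε := h2 k₁ le_rfl
      have hcombined : α * (ξ k₁ - ξ K) ≤ q + ε - ξ K := by
        rw [hmul] at hsum
        rw [hφK] at htel
        linarith
      have hKgtq : q < ξ K := hKq
      have : α * (ξ k₁ - ξ K) ≤ ε := by linarith
      have hdiv : ξ k₁ - ξ K ≤ ε / α := by
        rw [le_div_iff₀ hα]
        rw [mul_comm] at this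
        linarith
      simp only [hsdef]
      linarith
  have hk₁M : k₁ + 1 ≤ M := by
    by_contra hcon
    push_neg at hcon
    have : ξ M ≤ ξ k₁ := xi_mono hmono (by omega) (by omega)
    linarith
  have : φ (k₁ + 1) ≤ x + ξ (k₁ + 1) := hφle (by omega)
  have hxiM : ξ (k₁ + 1) ≤ ξ M := xi_mono hmono hk₁M hM
  rw [hfro, hFs]
  linarith

end philem

section measlem

open scoped Classical

variable {ξ : ℕ → ℝ} {m : ℕ}

lemma partMeasure_apply {S : Set ℝ} (hS : MeasurableSet S) :
    partMeasure ξ m S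
      = ∑ k ∈ Finset.range (m + 2), if ξ k ∈ S then ENNReal.ofReal (ξ (k + 1) - ξ k) else 0 := by
  rw [partMeasure]
  rw [Measure.finset_sum_apply]
  apply Finset.sum_congr rfl
  intro k _
  rw [Measure.smul_apply, Measure.dirac_apply' _ hS, Set.indicator_apply]
  by_cases h : ξ k ∈ S
  · rw [if_pos h, if_pos h]; simp
  · rw [if_neg h, if_neg h]; simp

lemma partMeasure_univ (hmono : ∀ k, k < m + 2 → ξ k ≤ ξ (k + 1)) (h0 : ξ 0 = 0)
    (htop : ξ (m + 2) = 1) : partMeasure ξ m Set.univ = 1 := by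
  rw [partMeasure_apply MeasurableSet.univ]
  have h1 : ∀ k ∈ Finset.range (m + 2),
      (if ξ k ∈ Set.univ then ENNReal.ofReal (ξ (k + 1) - ξ k) else 0)
        = ENNReal.ofReal (ξ (k + 1) - ξ k) := by
    intro k _; rw [if_pos (Set.mem_univ _)]
  simp only [Set.mem_univ, if_true]
  rw [← ENNReal.ofReal_sum_of_nonneg, Finset.sum_range_sub, htop, h0]
  · norm_num
  · intro k hk
    rw [Finset.mem_range] at hk
    have := hmono k hk; linarith

lemma partMeasure_Ioc (hmono : ∀ k, k < m + 2 → ξ k ≤ ξ (k + 1)) {a b : ℝ} (hab : a ≤ b) :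
    (partMeasure ξ m (Set.Ioc a b)).toReal = Fpart ξ m b - Fpart ξ m a := by
  rw [partMeasure_apply measurableSet_Ioc, ENNReal.toReal_sum]
  · rw [Fpart, Fpart, ← Finset.sum_sub_distrib]
    apply Finset.sum_congr rfl
    intro k hk
    rw [Finset.mem_range] at hk
    have hΔ : 0 ≤ ξ (k + 1) - ξ k := by have := hmono k hk; linarith
    by_cases h1 : ξ k ≤ a
    · rw [if_pos h1, if_pos (le_trans h1 hab), if_neg (by simp [Set.mem_Ioc]; intro hc; linarith)]
      simp
    · by_cases h2 : ξ k ≤ b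
      · rw [if_neg h1, if_pos h2, if_pos (by simp [Set.mem_Ioc]; exact ⟨lt_of_not_ge h1, h2⟩)]
        rw [ENNReal.toReal_ofReal hΔ]
        ring
      · rw [if_neg h1, if_neg h2, if_neg (by simp [Set.mem_Ioc]; intro hc; linarith [lt_of_not_ge h2])]
        simp
  · intro k _
    split
    · exact ENNReal.ofReal_ne_top
    · exact ENNReal.zero_ne_top

lemma partMeasure_compl_zero (hmono : ∀ k, k < m + 2 → ξ k ≤ ξ (k + 1)) (h0 : ξ 0 = 0)
    (htop : ξ (m + 2) = 1) {a b : ℝ} (ha : a < 0) (hb : 1 ≤ b) :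
    partMeasure ξ m (Set.Ioc a b)ᶜ = 0 := by
  rw [partMeasure_apply measurableSet_Ioc.compl]
  apply Finset.sum_eq_zero
  intro k hk
  rw [Finset.mem_range] at hk
  have h1 := xi_nonneg hmono h0 (k := k) (by omega)
  have h2 := xi_le_one hmono htop (k := k) (by omega)
  have hmem : ξ k ∈ Set.Ioc a b := ⟨lt_of_lt_of_le ha h1, le_trans h2 hb⟩
  rw [if_neg (Set.notMem_compl_iff.2 hmem)]

lemma integral_partMeasure (hmono : ∀ k, k < m + 2 → ξ k ≤ ξ (k + 1))
    {g : ℝ → ℝ} (hg : Continuous g) {C : ℝ} (hC : ∀ w, |g w| ≤ C) :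
    ∫ w, g w ∂(partMeasure ξ m)
      = ∑ k ∈ Finset.range (m + 2), (ξ (k + 1) - ξ k) * g (ξ k) := by
  have hint : ∀ k ∈ Finset.range (m + 2),
      Integrable g (ENNReal.ofReal (ξ (k + 1) - ξ k) • Measure.dirac (ξ k)) := by
    intro k _
    apply Integrable.smul_measure ?_ ENNReal.ofReal_ne_top
    have : IsProbabilityMeasure (Measure.dirac (ξ k) : Measure ℝ) := inferInstance
    apply Integrable.mono' (integrable_const C) hg.aestronglyMeasurable
    exact ae_of_all _ fun a => by rw [Real.norm_eq_abs]; exact hC a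
  rw [partMeasure, integral_finset_sum_measure hint]
  apply Finset.sum_congr rfl
  intro k hk
  rw [Finset.mem_range] at hk
  rw [integral_smul_measure, integral_dirac, ENNReal.toReal_ofReal (by have := hmono k hk; linarith)]
  simp

end measlem

section mainlem

variable (p : ℕ → ℕ) (ξ : ℕ → ℕ → ℝ)

/-- CDF of the n-th partition measure. -/
def FF (n : ℕ) (t : ℝ) : ℝ := Fpart (ξ n) (p n) t

def liminfF (q : ℚ) : ℝ := Filter.liminf (fun n => FF p ξ n (q : ℝ)) Filter.atTop

/-- Candidate limit CDF. -/
def Gfun (t : ℝ) : ℝ := sInf (liminfF p ξ '' {q : ℚ | t < (q : ℝ)})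

variable {p ξ}
variable (hξ0 : ∀ n, ξ n 0 = 0) (hξtop : ∀ n, ξ n (p n + 2) = 1)
  (hξmono : ∀ n k, k < p n + 2 → ξ n k ≤ ξ n (k + 1))

section withhyp
include hξ0 hξtop hξmono

lemma FF_nonneg (n : ℕ) (t : ℝ) : 0 ≤ FF p ξ n t := Fpart_nonneg (hξmono n) t

lemma FF_le_one (n : ℕ) (t : ℝ) : FF p ξ n t ≤ 1 :=
  Fpart_le_one (hξmono n) (hξ0 n) (hξtop n) t

lemma FF_mono (n : ℕ) {t t' : ℝ} (h : t ≤ t') : FF p ξ n t ≤ FF p ξ n t' :=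
  Fpart_mono (hξmono n) h

lemma FF_bddUnder (t : ℝ) :
    Filter.IsBoundedUnder (· ≤ ·) Filter.atTop (fun n => FF p ξ n t) :=
  Filter.isBoundedUnder_of ⟨1, fun n => FF_le_one hξ0 hξtop hξmono n t⟩

lemma FF_bddOver (t : ℝ) :
    Filter.IsBoundedUnder (· ≥ ·) Filter.atTop (fun n => FF p ξ n t) :=
  Filter.isBoundedUnder_of ⟨0, fun n => FF_nonneg hξ0 hξtop hξmono n t⟩

/-- The key sandwich: limsup of the CDFs at `q` is at most the liminf at any larger `q'`. -/
lemma limsupFF_le_liminfFF {x : ℝ}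
    (hx : ∀ q ε : ℚ, 0 < ε → ∃ l : ℝ,
      Filter.Tendsto (fun n => phiIter (zqe x (q : ℝ) (ε : ℝ)) x (ξ n) (p n + 2))
        Filter.atTop (𝓝 l))
    {q q' : ℚ} (hqq : (q : ℝ) < (q' : ℝ)) :
    Filter.limsup (fun n => FF p ξ n q) Filter.atTop
      ≤ Filter.liminf (fun n => FF p ξ n q') Filter.atTop := by
  apply le_of_forall_pos_le_add
  intro η hη
  set α : ℝ := η / 2 with hαdef
  have hα : 0 < α := by simp only [hαdef]; linarith
  have hc : (0:ℝ) < 1 + 1 / α := by positivity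
  have hd : (0:ℝ) < min (η / 2) (((q' : ℝ) - q) / (1 + 1 / α)) :=
    lt_min (by linarith) (div_pos (by linarith) hc)
  obtain ⟨ε, hε0, hεlt⟩ := exists_rat_btwn hd
  have hε0' : (0:ℝ) < (ε : ℝ) := by exact_mod_cast hε0
  have hε0'' : (0:ℚ) < ε := by exact_mod_cast hε0
  obtain ⟨l, hl⟩ := hx q ε hε0''
  set T : ℕ → ℝ := fun n => phiIter (zqe x (q : ℝ) (ε : ℝ)) x (ξ n) (p n + 2) with hTdef
  have hεle : (ε : ℝ) ≤ η / 2 := le_of_lt (lt_of_lt_of_le hεlt (min_le_left _ _))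
  have hεsum : (ε : ℝ) + (ε : ℝ) / α ≤ (q' : ℝ) - q := by
    have h1 : (ε : ℝ) < ((q' : ℝ) - q) / (1 + 1 / α) :=
      lt_of_lt_of_le hεlt (min_le_right _ _)
    have h2 : (ε : ℝ) * (1 + 1 / α) < (q' : ℝ) - q := by
      rw [← lt_div_iff₀ hc]; exact h1
    have h3 : (ε : ℝ) * (1 + 1 / α) = (ε : ℝ) + (ε : ℝ) / α := by
      rw [mul_add, mul_one, mul_one_div]
    linarith
  have hL : ∀ n, FF p ξ n q ≤ T n - x := fun n =>
    terminal_lower (hξmono n) (hξ0 n) (hξtop n) hε0'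
  have hU : ∀ n, T n - x - ε - α ≤ FF p ξ n q' := by
    intro n
    have h1 := terminal_upper (hξmono n) (hξ0 n) (hξtop n) hε0' hα
      (x := x) (q := (q : ℝ))
    have h2 : Fpart (ξ n) (p n) ((q : ℝ) + ε + (ε : ℝ) / α)
        ≤ Fpart (ξ n) (p n) (q' : ℝ) :=
      Fpart_mono (hξmono n) (by linarith)
    show T n - x - ε - α ≤ Fpart (ξ n) (p n) (q' : ℝ)
    simp only [hTdef]
    linarith
  have hTub : Filter.IsBoundedUnder (· ≤ ·) Filter.atTop (fun n => T n - x) := by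
    apply Filter.isBoundedUnder_of
    refine ⟨1, fun n => ?_⟩
    have h1 := phi_le (hξmono n) (hξ0 n) hε0' (le_refl (p n + 2))
      (x := x) (q := (q : ℝ))
    rw [hξtop n] at h1
    show T n - x ≤ 1
    simp only [hTdef]
    linarith
  have hTlb : Filter.IsBoundedUnder (· ≥ ·) Filter.atTop (fun n => T n - x - ε - α) := by
    apply Filter.isBoundedUnder_of
    refine ⟨-(ε : ℝ) - α, fun n => ?_⟩
    have h1 := phi_nonneg_incr (hξmono n) hε0' (le_refl (p n + 2))
      (x := x) (q := (q : ℝ))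
    show T n - x - ε - α ≥ -(ε : ℝ) - α
    simp only [hTdef]
    linarith
  have step1 : Filter.limsup (fun n => FF p ξ n q) Filter.atTop
      ≤ Filter.limsup (fun n => T n - x) Filter.atTop :=
    Filter.limsup_le_limsup (Filter.Eventually.of_forall hL)
      ((FF_bddOver hξ0 hξtop hξmono (q : ℝ)).isCoboundedUnder_le) hTub
  have step2 : Filter.limsup (fun n => T n - x) Filter.atTop = l - x :=
    (hl.sub_const x).limsup_eq
  have step3 : Filter.liminf (fun n => T n - x - ε - α) Filter.atTop = l - x - ε - α :=
    (((hl.sub_const x).sub_const (ε : ℝ)).sub_const α).liminf_eq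
  have step4 : Filter.liminf (fun n => T n - x - ε - α) Filter.atTop
      ≤ Filter.liminf (fun n => FF p ξ n q') Filter.atTop :=
    Filter.liminf_le_liminf (Filter.Eventually.of_forall hU) hTlb
      ((FF_bddUnder hξ0 hξtop hξmono (q' : ℝ)).isCoboundedUnder_ge)
  have hαle : α ≤ η / 2 := hαdef.le
  linarith [step1, step2.le, step3.symm.le, step4]

lemma liminfF_nonneg (q : ℚ) : 0 ≤ liminfF p ξ q :=
  Filter.le_liminf_of_le ((FF_bddUnder hξ0 hξtop hξmono (q : ℝ)).isCoboundedUnder_ge)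
    (Filter.Eventually.of_forall fun n => FF_nonneg hξ0 hξtop hξmono n q)

lemma liminfF_le_one (q : ℚ) : liminfF p ξ q ≤ 1 := by
  refine le_trans (Filter.liminf_le_limsup (FF_bddUnder hξ0 hξtop hξmono (q : ℝ))
    (FF_bddOver hξ0 hξtop hξmono (q : ℝ))) ?_
  exact Filter.limsup_le_of_le ((FF_bddOver hξ0 hξtop hξmono (q : ℝ)).isCoboundedUnder_le)
    (Filter.Eventually.of_forall fun n => FF_le_one hξ0 hξtop hξmono n q)

lemma Gfun_bddBelow (t : ℝ) : BddBelow (liminfF p ξ '' {q : ℚ | t < (q : ℝ)}) := by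
  refine ⟨0, ?_⟩
  rintro b ⟨q, _, rfl⟩
  exact liminfF_nonneg hξ0 hξtop hξmono q

lemma Gfun_set_nonempty (t : ℝ) : (liminfF p ξ '' {q : ℚ | t < (q : ℝ)}).Nonempty := by
  obtain ⟨q, hq⟩ := exists_rat_gt t
  exact ⟨liminfF p ξ q, ⟨q, hq, rfl⟩⟩

lemma Gfun_le {t : ℝ} {q : ℚ} (h : t < (q : ℝ)) : Gfun p ξ t ≤ liminfF p ξ q :=
  csInf_le (Gfun_bddBelow hξ0 hξtop hξmono t) ⟨q, h, rfl⟩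

lemma le_Gfun {x : ℝ}
    (hx : ∀ q ε : ℚ, 0 < ε → ∃ l : ℝ,
      Filter.Tendsto (fun n => phiIter (zqe x (q : ℝ) (ε : ℝ)) x (ξ n) (p n + 2))
        Filter.atTop (𝓝 l))
    {t : ℝ} {q : ℚ} (h : (q : ℝ) < t) : liminfF p ξ q ≤ Gfun p ξ t := by
  apply le_csInf (Gfun_set_nonempty hξ0 hξtop hξmono t)
  rintro b ⟨q', hq', rfl⟩
  refine le_trans (Filter.liminf_le_limsup (FF_bddUnder hξ0 hξtop hξmono (q : ℝ))
    (FF_bddOver hξ0 hξtop hξmono (q : ℝ))) ?_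
  exact limsupFF_le_liminfFF hξ0 hξtop hξmono hx (lt_trans h hq')

lemma Gfun_mono : Monotone (Gfun p ξ) := by
  intro t t' htt
  apply csInf_le_csInf (Gfun_bddBelow hξ0 hξtop hξmono t) (Gfun_set_nonempty hξ0 hξtop hξmono t')
  apply Set.image_mono
  intro q hq
  exact lt_of_le_of_lt htt hq

lemma Gfun_nonneg (t : ℝ) : 0 ≤ Gfun p ξ t :=
  le_csInf (Gfun_set_nonempty hξ0 hξtop hξmono t) (by rintro b ⟨q, _, rfl⟩; exact liminfF_nonneg hξ0 hξtop hξmono q)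

lemma Gfun_le_one (t : ℝ) : Gfun p ξ t ≤ 1 := by
  obtain ⟨q, hq⟩ := exists_rat_gt t
  exact le_trans (Gfun_le hξ0 hξtop hξmono hq) (liminfF_le_one hξ0 hξtop hξmono q)

lemma Gfun_of_neg {t : ℝ} (ht : t < 0) : Gfun p ξ t = 0 := by
  apply le_antisymm ?_ (Gfun_nonneg hξ0 hξtop hξmono t)
  obtain ⟨q, htq, hq0⟩ := exists_rat_btwn ht
  have hq0' : (q : ℝ) < 0 := hq0
  have hFF : (fun n => FF p ξ n (q : ℝ)) = fun _ => (0 : ℝ) := by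
    funext n
    exact Fpart_of_neg (hξmono n) (hξ0 n) hq0'
  have : liminfF p ξ q = 0 := by
    rw [liminfF, hFF, Filter.liminf_const]
  calc Gfun p ξ t ≤ liminfF p ξ q := Gfun_le hξ0 hξtop hξmono htq
  _ = 0 := this

lemma Gfun_of_ge_one {t : ℝ} (ht : 1 ≤ t) : Gfun p ξ t = 1 := by
  have hall : ∀ b ∈ liminfF p ξ '' {q : ℚ | t < (q : ℝ)}, b = 1 := by
    rintro b ⟨q, hq, rfl⟩
    have : (fun n => FF p ξ n (q : ℝ)) = fun _ => (1 : ℝ) := by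
      funext n
      exact Fpart_of_ge_one (hξmono n) (hξ0 n) (hξtop n) (le_trans ht (le_of_lt hq))
    rw [liminfF, this, Filter.liminf_const]
  apply le_antisymm
  · obtain ⟨q, hq⟩ := exists_rat_gt t
    have := hall (liminfF p ξ q) ⟨q, hq, rfl⟩
    calc Gfun p ξ t ≤ liminfF p ξ q := Gfun_le hξ0 hξtop hξmono hq
    _ = 1 := this
  · exact le_csInf (Gfun_set_nonempty hξ0 hξtop hξmono t) (fun b hb => (hall b hb).ge)

lemma Gfun_rightCont (t : ℝ) : ContinuousWithinAt (Gfun p ξ) (Set.Ici t) t := by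
  rw [Metric.continuousWithinAt_iff]
  intro η hη
  have hlt : sInf (liminfF p ξ '' {q : ℚ | t < (q : ℝ)}) < Gfun p ξ t + η / 2 := by
    have : Gfun p ξ t = sInf (liminfF p ξ '' {q : ℚ | t < (q : ℝ)}) := rfl
    linarith [this.symm.le]
  obtain ⟨b, hbmem, hblt⟩ := exists_lt_of_csInf_lt (Gfun_set_nonempty hξ0 hξtop hξmono t) hlt
  obtain ⟨q, hq, rfl⟩ := hbmem
  have hq' : t < (q : ℝ) := hq
  refine ⟨(q : ℝ) - t, by linarith, ?_⟩
  intro u hu hud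
  rw [Real.dist_eq] at hud
  have hut : t ≤ u := hu
  have huq : u < (q : ℝ) := by
    rw [abs_lt] at hud
    linarith [hud.1, hud.2]
  have h1 : Gfun p ξ u ≤ liminfF p ξ q := Gfun_le hξ0 hξtop hξmono huq
  have h2 : Gfun p ξ t ≤ Gfun p ξ u := Gfun_mono hξ0 hξtop hξmono hut
  rw [Real.dist_eq, abs_lt]
  constructor <;> linarith

lemma FF_tendsto_Gfun {x : ℝ}
    (hx : ∀ q ε : ℚ, 0 < ε → ∃ l : ℝ,
      Filter.Tendsto (fun n => phiIter (zqe x (q : ℝ) (ε : ℝ)) x (ξ n) (p n + 2))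
        Filter.atTop (𝓝 l))
    {t : ℝ} (hcont : ContinuousAt (Gfun p ξ) t) :
    Filter.Tendsto (fun n => FF p ξ n t) Filter.atTop (𝓝 (Gfun p ξ t)) := by
  apply tendsto_of_le_liminf_of_limsup_le
  · -- lower bound via left-continuity at t
    apply le_of_forall_pos_le_add
    intro η hη
    rw [Metric.continuousAt_iff] at hcont
    obtain ⟨δ, hδ, hball⟩ := hcont η hη
    set u : ℝ := t - δ / 2 with hudef
    have hu : |u - t| < δ := by
      rw [hudef]; rw [abs_lt]; constructor <;> linarith
    have hGu : |Gfun p ξ u - Gfun p ξ t| < η := by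
      have := hball (x := u) (by rw [Real.dist_eq]; exact hu)
      rwa [Real.dist_eq] at this
    obtain ⟨q, huq, hqt⟩ := exists_rat_btwn (show u < t by rw [hudef]; linarith)
    have h1 : Gfun p ξ u ≤ liminfF p ξ q := Gfun_le hξ0 hξtop hξmono huq
    have h2 : liminfF p ξ q ≤ Filter.liminf (fun n => FF p ξ n t) Filter.atTop := by
      apply Filter.liminf_le_liminf
        (Filter.Eventually.of_forall fun n => FF_mono hξ0 hξtop hξmono n (le_of_lt hqt))
        (FF_bddOver hξ0 hξtop hξmono (q : ℝ))
        ((FF_bddUnder hξ0 hξtop hξmono t).isCoboundedUnder_ge)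
    rw [abs_lt] at hGu
    linarith [hGu.1]
  · -- upper bound
    apply le_csInf (Gfun_set_nonempty hξ0 hξtop hξmono t)
    rintro b ⟨q', hq', rfl⟩
    have hq'' : t < (q' : ℝ) := hq'
    obtain ⟨q'', htq, hqq⟩ := exists_rat_btwn hq''
    have h1 : Filter.limsup (fun n => FF p ξ n t) Filter.atTop
        ≤ Filter.limsup (fun n => FF p ξ n (q'' : ℝ)) Filter.atTop :=
      Filter.limsup_le_limsup
        (Filter.Eventually.of_forall fun n => FF_mono hξ0 hξtop hξmono n (le_of_lt htq))
        ((FF_bddOver hξ0 hξtop hξmono t).isCoboundedUnder_le)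
        (FF_bddUnder hξ0 hξtop hξmono (q'' : ℝ))
    have hqq' : (q'' : ℝ) < (q' : ℝ) := hqq
    exact le_trans h1 (limsupFF_le_liminfFF hξ0 hξtop hξmono hx hqq')
  · exact FF_bddUnder hξ0 hξtop hξmono t
  · exact FF_bddOver hξ0 hξtop hξmono t

end withhyp

end mainlem

section approx

lemma tpts_mono {t : ℕ → ℝ} {N : ℕ} (hts : ∀ i, i < N → t i < t (i + 1)) :
    ∀ {i j : ℕ}, i ≤ j → j ≤ N → t i ≤ t j := by
  intro i j hij hj
  induction j with
  | zero =>
    have : i = 0 := by omega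
    subst this; exact le_rfl
  | succ j ih =>
    rcases Nat.lt_or_ge i (j + 1) with h | h
    · exact le_trans (ih (by omega) (by omega)) (le_of_lt (hts j (by omega)))
    · have : i = j + 1 := by omega
      subst this; exact le_rfl

lemma integral_approx (ρ : Measure ℝ) [IsProbabilityMeasure ρ] {g : ℝ → ℝ}
    (hg : Continuous g) {C : ℝ} (hC : ∀ w, |g w| ≤ C) (t : ℕ → ℝ) (N : ℕ)
    (hts : ∀ i, i < N → t i < t (i + 1))
    (hnull : ρ (Set.Ioc (t 0) (t N))ᶜ = 0) {η : ℝ} (hη : 0 ≤ η)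
    (hosc : ∀ i, i < N → ∀ u ∈ Set.Ioc (t i) (t (i + 1)), |g u - g (t (i + 1))| ≤ η) :
    |(∫ w, g w ∂ρ)
      - ∑ i ∈ Finset.range N, g (t (i + 1)) * (ρ (Set.Ioc (t i) (t (i + 1)))).toReal| ≤ η := by
  have hint : Integrable g ρ := by
    apply Integrable.mono' (integrable_const C) hg.aestronglyMeasurable
    exact ae_of_all _ fun a => by rw [Real.norm_eq_abs]; exact hC a
  have key : ∀ j, j ≤ N →
      |(∫ w in Set.Ioc (t 0) (t j), g w ∂ρ)
        - ∑ i ∈ Finset.range j, g (t (i + 1)) * (ρ (Set.Ioc (t i) (t (i + 1)))).toReal|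
      ≤ η * (ρ (Set.Ioc (t 0) (t j))).toReal := by
    intro j hj
    induction j with
    | zero =>
      simp [Set.Ioc_self]
    | succ j ih =>
      have hjN : j ≤ N := by omega
      have h0j : t 0 ≤ t j := tpts_mono hts (Nat.zero_le j) hjN
      have hjj : t j ≤ t (j + 1) := le_of_lt (hts j (by omega))
      have hsplit : Set.Ioc (t 0) (t (j + 1))
          = Set.Ioc (t 0) (t j) ∪ Set.Ioc (t j) (t (j + 1)) :=
        (Set.Ioc_union_Ioc_eq_Ioc h0j hjj).symm
      have hdisj : Disjoint (Set.Ioc (t 0) (t j)) (Set.Ioc (t j) (t (j + 1))) := by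
        rw [Set.disjoint_left]
        rintro a ⟨_, ha2⟩ ⟨ha3, _⟩
        exact absurd ha3 (not_lt.2 ha2)
      have hidecomp : (∫ w in Set.Ioc (t 0) (t (j + 1)), g w ∂ρ)
          = (∫ w in Set.Ioc (t 0) (t j), g w ∂ρ)
            + ∫ w in Set.Ioc (t j) (t (j + 1)), g w ∂ρ := by
        rw [hsplit]
        exact setIntegral_union hdisj measurableSet_Ioc hint.integrableOn hint.integrableOn
      have hmdecomp : (ρ (Set.Ioc (t 0) (t (j + 1)))).toReal
          = (ρ (Set.Ioc (t 0) (t j))).toReal + (ρ (Set.Ioc (t j) (t (j + 1)))).toReal := by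
        rw [hsplit, measure_union hdisj measurableSet_Ioc,
          ENNReal.toReal_add (measure_ne_top ρ _) (measure_ne_top ρ _)]
      have hpiece : |(∫ w in Set.Ioc (t j) (t (j + 1)), g w ∂ρ)
          - g (t (j + 1)) * (ρ (Set.Ioc (t j) (t (j + 1)))).toReal|
          ≤ η * (ρ (Set.Ioc (t j) (t (j + 1)))).toReal := by
        have heq : (∫ w in Set.Ioc (t j) (t (j + 1)), g w ∂ρ)
            - g (t (j + 1)) * (ρ (Set.Ioc (t j) (t (j + 1)))).toReal
            = ∫ w in Set.Ioc (t j) (t (j + 1)), (g w - g (t (j + 1))) ∂ρ := by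
          rw [integral_sub hint.integrableOn (integrable_const _), setIntegral_const,
            smul_eq_mul, mul_comm]; rfl
        rw [heq, ← Real.norm_eq_abs]
        have := norm_setIntegral_le_of_norm_le_const (μ := ρ)
          (s := Set.Ioc (t j) (t (j + 1))) (C := η)
          (measure_lt_top ρ _)
          (fun u hu => by rw [Real.norm_eq_abs]; exact hosc j (by omega) u hu)
          (f := fun w => g w - g (t (j + 1)))
        exact this
      rw [Finset.sum_range_succ, hidecomp, hmdecomp]
      have htri : |(∫ w in Set.Ioc (t 0) (t j), g w ∂ρ)
            + (∫ w in Set.Ioc (t j) (t (j + 1)), g w ∂ρ)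
          - (∑ i ∈ Finset.range j, g (t (i + 1)) * (ρ (Set.Ioc (t i) (t (i + 1)))).toReal
            + g (t (j + 1)) * (ρ (Set.Ioc (t j) (t (j + 1)))).toReal)|
          ≤ |(∫ w in Set.Ioc (t 0) (t j), g w ∂ρ)
            - ∑ i ∈ Finset.range j, g (t (i + 1)) * (ρ (Set.Ioc (t i) (t (i + 1)))).toReal|
          + |(∫ w in Set.Ioc (t j) (t (j + 1)), g w ∂ρ)
            - g (t (j + 1)) * (ρ (Set.Ioc (t j) (t (j + 1)))).toReal| := by
        have := abs_add_le ((∫ w in Set.Ioc (t 0) (t j), g w ∂ρ)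
            - ∑ i ∈ Finset.range j, g (t (i + 1)) * (ρ (Set.Ioc (t i) (t (i + 1)))).toReal)
          ((∫ w in Set.Ioc (t j) (t (j + 1)), g w ∂ρ)
            - g (t (j + 1)) * (ρ (Set.Ioc (t j) (t (j + 1)))).toReal)
        calc _ = |((∫ w in Set.Ioc (t 0) (t j), g w ∂ρ)
            - ∑ i ∈ Finset.range j, g (t (i + 1)) * (ρ (Set.Ioc (t i) (t (i + 1)))).toReal)
          + ((∫ w in Set.Ioc (t j) (t (j + 1)), g w ∂ρ)
            - g (t (j + 1)) * (ρ (Set.Ioc (t j) (t (j + 1)))).toReal)| := by congr 1; ring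
        _ ≤ _ := this
      have hihj := ih hjN
      calc _ ≤ _ := htri
      _ ≤ η * (ρ (Set.Ioc (t 0) (t j))).toReal
            + η * (ρ (Set.Ioc (t j) (t (j + 1)))).toReal := add_le_add hihj hpiece
      _ = η * ((ρ (Set.Ioc (t 0) (t j))).toReal + (ρ (Set.Ioc (t j) (t (j + 1)))).toReal) := by
        ring
  have htot : (∫ w, g w ∂ρ) = ∫ w in Set.Ioc (t 0) (t N), g w ∂ρ := by
    rw [← integral_add_compl (measurableSet_Ioc) hint]
    have hzero : ρ.restrict (Set.Ioc (t 0) (t N))ᶜ = 0 := Measure.restrict_eq_zero.2 hnull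
    rw [hzero, integral_zero_measure, add_zero]
  have hle1 : (ρ (Set.Ioc (t 0) (t N))).toReal ≤ 1 := by
    have h1 : ρ (Set.Ioc (t 0) (t N)) ≤ 1 := prob_le_one
    calc (ρ (Set.Ioc (t 0) (t N))).toReal ≤ (1 : ENNReal).toReal :=
        ENNReal.toReal_mono ENNReal.one_ne_top h1
    _ = 1 := by simp
  have := key N le_rfl
  rw [← htot] at this
  calc _ ≤ η * (ρ (Set.Ioc (t 0) (t N))).toReal := this
  _ ≤ η * 1 := by
      apply mul_le_mul_of_nonneg_left hle1 hη
  _ = η := mul_one η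

end approx

end SPaux


open SPaux in
/-- Remark 4.3: weak convergence of the partition measures already follows
from convergence of the terminal Euler iterates for the countable family `z_{q,ε}`,
`q, ε ∈ ℚ`, `ε > 0`. -/
theorem weak_convergence_of_partition_measures_countable_family
    (p : ℕ → ℕ) (ξ : ℕ → ℕ → ℝ)
    (hξ0 : ∀ n, ξ n 0 = 0) (hξtop : ∀ n, ξ n (p n + 2) = 1)
    (hξmono : ∀ n k, k < p n + 2 → ξ n k ≤ ξ n (k + 1))
    (hconv : ∃ x : ℝ, ∀ q ε : ℚ, 0 < ε →
      ∃ l : ℝ, Tendsto (fun n => phiIter (zqe x (q : ℝ) (ε : ℝ)) x (ξ n) (p n + 2))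
        atTop (𝓝 l)) :
    ∃ μ : Measure ℝ, IsProbabilityMeasure μ ∧
      ∀ g : ℝ → ℝ, Continuous g → (∃ C : ℝ, ∀ w, |g w| ≤ C) →
        Tendsto (fun n => ∫ w, g w ∂(partMeasure (ξ n) (p n))) atTop (𝓝 (∫ w, g w ∂μ)) := by
  obtain ⟨x, hx⟩ := hconv
  set G : StieltjesFunction ℝ :=
    ⟨Gfun p ξ, Gfun_mono hξ0 hξtop hξmono, Gfun_rightCont hξ0 hξtop hξmono⟩ with hGdef
  have hGbot : Tendsto (⇑G) atBot (𝓝 0) := by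
    have hev : (fun _ : ℝ => (0:ℝ)) =ᶠ[atBot] ⇑G := by
      filter_upwards [eventually_le_atBot (-1 : ℝ)] with b hb
      exact (Gfun_of_neg hξ0 hξtop hξmono (by linarith)).symm
    exact Tendsto.congr' hev tendsto_const_nhds
  have hGtop : Tendsto (⇑G) atTop (𝓝 1) := by
    have hev : (fun _ : ℝ => (1:ℝ)) =ᶠ[atTop] ⇑G := by
      filter_upwards [eventually_ge_atTop (1 : ℝ)] with b hb
      exact (Gfun_of_ge_one hξ0 hξtop hξmono hb).symm
    exact Tendsto.congr' hev tendsto_const_nhds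
  set μ : Measure ℝ := G.measure with hμdef
  have hμuniv : μ Set.univ = 1 := by
    rw [hμdef, G.measure_univ hGbot hGtop]
    norm_num
  have instμ : IsProbabilityMeasure μ := ⟨hμuniv⟩
  refine ⟨μ, instμ, ?_⟩
  rintro g hg ⟨C, hC⟩
  have hprob : ∀ n, IsProbabilityMeasure (partMeasure (ξ n) (p n)) := fun n =>
    ⟨partMeasure_univ (hξmono n) (hξ0 n) (hξtop n)⟩
  rw [Metric.tendsto_atTop]
  intro η₀ hη₀
  set η : ℝ := η₀ / 4 with hηdef
  have hη : 0 < η := by rw [hηdef]; linarith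
  -- uniform continuity of g on [-1, 2]
  have huc := (isCompact_Icc (a := (-1:ℝ)) (b := (2:ℝ))).uniformContinuousOn_of_continuous
    hg.continuousOn
  rw [Metric.uniformContinuousOn_iff] at huc
  obtain ⟨δ, hδ, hδb⟩ := huc η hη
  set γ : ℝ := min δ 1 / 2 with hγdef
  have hγ : 0 < γ := by rw [hγdef]; positivity
  have hγδ : 2 * γ ≤ δ := by
    rw [hγdef]; have := min_le_left δ 1; linarith
  have hγ1 : 2 * γ ≤ 1 := by
    rw [hγdef]; have := min_le_right δ 1; linarith
  set N : ℕ := ⌈1 / γ⌉₊ + 1 with hNdef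
  have hNγ : 1 + γ ≤ (N : ℝ) * γ := by
    have h1 := Nat.le_ceil (1 / γ)
    have : (N : ℝ) = (⌈1 / γ⌉₊ : ℝ) + 1 := by rw [hNdef]; push_cast; ring
    rw [this]
    have h2 : (1 / γ) * γ = 1 := by field_simp
    nlinarith
  have hNγ2 : (N : ℝ) * γ ≤ 1 + 2 * γ := by
    have h1 := Nat.ceil_lt_add_one (by positivity : (0:ℝ) ≤ 1 / γ)
    have : (N : ℝ) = (⌈1 / γ⌉₊ : ℝ) + 1 := by rw [hNdef]; push_cast; ring
    rw [this]
    have h2 : (1 / γ) * γ = 1 := by field_simp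
    nlinarith
  -- choose continuity points
  have hE : {u : ℝ | ¬ContinuousAt (Gfun p ξ) u}.Countable :=
    (Gfun_mono hξ0 hξtop hξmono).countable_not_continuousAt
  have hEchoice : ∀ i : ℕ, ∃ u : ℝ,
      ((i : ℝ) * γ - γ < u ∧ u < (i : ℝ) * γ) ∧ ContinuousAt (Gfun p ξ) u := by
    intro i
    by_contra hcon
    push_neg at hcon
    have hsub : Set.Ioo ((i : ℝ) * γ - γ) ((i : ℝ) * γ) ⊆ {u : ℝ | ¬ContinuousAt (Gfun p ξ) u} :=
      fun u hu => hcon u ⟨hu.1, hu.2⟩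
    have h1 : volume (Set.Ioo ((i : ℝ) * γ - γ) ((i : ℝ) * γ)) = 0 :=
      measure_mono_null hsub (hE.measure_zero volume)
    rw [Real.volume_Ioo] at h1
    have h2 : (i : ℝ) * γ - ((i : ℝ) * γ - γ) = γ := by ring
    rw [h2] at h1
    rw [ENNReal.ofReal_eq_zero] at h1
    linarith
  choose t ht using hEchoice
  have htlb : ∀ i : ℕ, (i : ℝ) * γ - γ < t i := fun i => (ht i).1.1
  have htub : ∀ i : ℕ, t i < (i : ℝ) * γ := fun i => (ht i).1.2
  have htcont : ∀ i : ℕ, ContinuousAt (Gfun p ξ) (t i) := fun i => (ht i).2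
  have hts : ∀ i : ℕ, i < N → t i < t (i + 1) := by
    intro i _
    have h1 := htub i
    have h2 := htlb (i + 1)
    push_cast at h2
    linarith
  have hspace : ∀ i : ℕ, t (i + 1) - t i < 2 * γ := by
    intro i
    have h1 := htlb i
    have h2 := htub (i + 1)
    push_cast at h2
    linarith
  have ht0neg : t 0 < 0 := by have := htub 0; simpa using this
  have htN1 : 1 ≤ t N := by
    have := htlb N
    linarith
  have htrange : ∀ i : ℕ, i ≤ N → -1 ≤ t i ∧ t i ≤ 2 := by
    intro i hi
    have h1 := htlb i
    have h2 := htub i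
    have hcast : (i : ℝ) ≤ (N : ℝ) := by exact_mod_cast hi
    have h3 : (i : ℝ) * γ ≤ (N : ℝ) * γ := mul_le_mul_of_nonneg_right hcast hγ.le
    constructor
    · have : (0 : ℝ) ≤ (i : ℝ) * γ := by positivity
      linarith
    · linarith
  -- oscillation bound
  have hosc : ∀ i : ℕ, i < N → ∀ u ∈ Set.Ioc (t i) (t (i + 1)), |g u - g (t (i + 1))| ≤ η := by
    intro i hi u hu
    have hri := htrange i (by omega)
    have hri1 := htrange (i + 1) (by omega)
    have hu1 : -1 ≤ u := le_trans hri.1 hu.1.le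
    have hu2 : u ≤ 2 := le_trans hu.2 hri1.2
    have hd : dist u (t (i + 1)) < δ := by
      rw [Real.dist_eq, abs_lt]
      have := hspace i
      constructor <;> linarith [hu.1, hu.2]
    have := hδb u ⟨hu1, hu2⟩ (t (i + 1)) ⟨hri1.1, hri1.2⟩ hd
    rw [Real.dist_eq] at this
    exact this.le
  -- the two approximation bounds and the convergence of the middle sums
  have hbound1 : ∀ n, |(∫ w, g w ∂(partMeasure (ξ n) (p n)))
      - ∑ i ∈ Finset.range N, g (t (i + 1))
        * ((partMeasure (ξ n) (p n)) (Set.Ioc (t i) (t (i + 1)))).toReal| ≤ η := by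
    intro n
    have := hprob n
    exact integral_approx _ hg hC t N hts
      (partMeasure_compl_zero (hξmono n) (hξ0 n) (hξtop n) ht0neg htN1) hη.le hosc
  have hμIocTot : μ (Set.Ioc (t 0) (t N)) = 1 := by
    rw [hμdef, G.measure_Ioc]
    have h1 : G (t N) = 1 := Gfun_of_ge_one hξ0 hξtop hξmono htN1
    have h2 : G (t 0) = 0 := Gfun_of_neg hξ0 hξtop hξmono ht0neg
    rw [h1, h2]
    norm_num
  have hbound2 : |(∫ w, g w ∂μ)
      - ∑ i ∈ Finset.range N, g (t (i + 1)) * (μ (Set.Ioc (t i) (t (i + 1)))).toReal| ≤ η := by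
    apply integral_approx _ hg hC t N hts ?_ hη.le hosc
    rw [measure_compl measurableSet_Ioc (by rw [hμIocTot]; exact ENNReal.one_ne_top), hμIocTot,
      hμuniv, tsub_self]
  have hconvS : Tendsto (fun n => ∑ i ∈ Finset.range N, g (t (i + 1))
      * ((partMeasure (ξ n) (p n)) (Set.Ioc (t i) (t (i + 1)))).toReal) atTop
      (𝓝 (∑ i ∈ Finset.range N, g (t (i + 1)) * (μ (Set.Ioc (t i) (t (i + 1)))).toReal)) := by
    apply tendsto_finset_sum
    intro i hi
    rw [Finset.mem_range] at hi
    have htsle : t i ≤ t (i + 1) := (hts i hi).le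
    have hIeq : ∀ n, ((partMeasure (ξ n) (p n)) (Set.Ioc (t i) (t (i + 1)))).toReal
        = FF p ξ n (t (i + 1)) - FF p ξ n (t i) := fun n =>
      partMeasure_Ioc (hξmono n) htsle
    have hμIeq : (μ (Set.Ioc (t i) (t (i + 1)))).toReal
        = Gfun p ξ (t (i + 1)) - Gfun p ξ (t i) := by
      rw [hμdef, G.measure_Ioc,
        ENNReal.toReal_ofReal (by have := Gfun_mono hξ0 hξtop hξmono htsle; exact sub_nonneg.2 this)]
    have htend : Tendsto (fun n => FF p ξ n (t (i + 1)) - FF p ξ n (t i)) atTop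
        (𝓝 (Gfun p ξ (t (i + 1)) - Gfun p ξ (t i))) :=
      (FF_tendsto_Gfun hξ0 hξtop hξmono hx (htcont (i + 1))).sub
        (FF_tendsto_Gfun hξ0 hξtop hξmono hx (htcont i))
    simp only [hIeq, hμIeq]
    exact htend.const_mul _
  obtain ⟨N₀, hN₀⟩ := (Metric.tendsto_atTop.1 hconvS) η hη
  refine ⟨N₀, fun n hn => ?_⟩
  have h1 := hbound1 n
  have h2 := hbound2
  have h3 := hN₀ n hn
  rw [Real.dist_eq] at h3 ⊢
  have htri := abs_sub_le (∫ w, g w ∂(partMeasure (ξ n) (p n)))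
    (∑ i ∈ Finset.range N, g (t (i + 1))
      * ((partMeasure (ξ n) (p n)) (Set.Ioc (t i) (t (i + 1)))).toReal)
    (∫ w, g w ∂μ)
  have htri2 := abs_sub_le
    (∑ i ∈ Finset.range N, g (t (i + 1))
      * ((partMeasure (ξ n) (p n)) (Set.Ioc (t i) (t (i + 1)))).toReal)
    (∑ i ∈ Finset.range N, g (t (i + 1)) * (μ (Set.Ioc (t i) (t (i + 1)))).toReal)
    (∫ w, g w ∂μ)
  have h4 : |(∑ i ∈ Finset.range N, g (t (i + 1)) * (μ (Set.Ioc (t i) (t (i + 1)))).toReal)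
      - (∫ w, g w ∂μ)| = |(∫ w, g w ∂μ)
      - ∑ i ∈ Finset.range N, g (t (i + 1)) * (μ (Set.Ioc (t i) (t (i + 1)))).toReal| :=
    abs_sub_comm _ _
  rw [hηdef] at h1 h2 h3
  calc |(∫ w, g w ∂(partMeasure (ξ n) (p n))) - ∫ w, g w ∂μ| ≤ _ := htri
  _ ≤ _ := add_le_add_right htri2 _
  _ < η₀ := by rw [h4] at htri2 ⊢; linarith

end
end

section
/- Suppose F_n(F_n^{−1}(u) − δh_n) → σ(u) as n → ∞ and h_n → 0, for every δ ∈ (0,1) and every continuity point u ∈ [0,1] of σ. Then ∫_T |σ^n(u,t) − σ(u)| dt → 0 as n → ∞ and h_n → 0, for every continuity point u ∈ [0,1] of σ. -/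
open MeasureTheory Filter Set Topology

noncomputable section

section AuxLemmas

variable {ρ : ℕ → ℝ → ℝ} {n : ℕ}

lemma ae_ne_real' (r : ℝ) : ∀ᵐ s : ℝ, s ≠ r := by
  rw [ae_iff]
  simp only [ne_eq, not_not, setOf_eq_eq_singleton]
  exact measure_singleton r

lemma Fcdf_antitone (hρ : IsDeltaSeq ρ) (hn : 0 < n) : Antitone (Fcdf ρ n) := by
  obtain ⟨hsm, hnn, hsupp, hint⟩ := hρ n hn
  intro x y hxy
  have hc : Continuous (ρ n) := hsm.continuous
  have h1 : (∫ s in x..y, ρ n s) + ∫ s in y..(1/(n:ℝ)), ρ n s = ∫ s in x..(1/(n:ℝ)), ρ n s :=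
    intervalIntegral.integral_add_adjacent_intervals (hc.intervalIntegrable _ _)
      (hc.intervalIntegrable _ _)
  have h2 : 0 ≤ ∫ s in x..y, ρ n s := intervalIntegral.integral_nonneg hxy fun s _ => hnn s
  simp only [Fcdf]
  linarith

lemma Fcdf_continuous (hρ : IsDeltaSeq ρ) (hn : 0 < n) : Continuous (Fcdf ρ n) := by
  obtain ⟨hsm, hnn, hsupp, hint⟩ := hρ n hn
  have hc : Continuous (ρ n) := hsm.continuous
  have h1 : ∀ x, Fcdf ρ n x = (∫ s in (0:ℝ)..(1/(n:ℝ)), ρ n s) - ∫ s in (0:ℝ)..x, ρ n s := by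
    intro x
    have := intervalIntegral.integral_add_adjacent_intervals (a := 0) (b := x) (c := 1/(n:ℝ))
      (μ := volume) (hc.intervalIntegrable _ _) (hc.intervalIntegrable _ _)
    simp only [Fcdf]; linarith
  have h2 : Fcdf ρ n = fun x => (∫ s in (0:ℝ)..(1/(n:ℝ)), ρ n s) - ∫ s in (0:ℝ)..x, ρ n s :=
    funext h1
  rw [h2]
  exact continuous_const.sub
    (intervalIntegral.continuous_primitive (fun a b => hc.intervalIntegrable _ _) 0)

lemma Fcdf_eq_zero (hρ : IsDeltaSeq ρ) (hn : 0 < n) {x : ℝ} (hx : 1/(n:ℝ) ≤ x) :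
    Fcdf ρ n x = 0 := by
  obtain ⟨hsm, hnn, hsupp, hint⟩ := hρ n hn
  have : (∫ s in (1/(n:ℝ))..x, ρ n s) = ∫ s in (1/(n:ℝ))..x, (0:ℝ) := by
    apply intervalIntegral.integral_congr_ae
    filter_upwards with s hs
    rw [Set.uIoc_of_le hx] at hs
    exact hsupp s (fun hmem => absurd hmem.2 (not_le.2 hs.1))
  rw [Fcdf, intervalIntegral.integral_symm, this]
  simp

lemma Fcdf_eq_one (hρ : IsDeltaSeq ρ) (hn : 0 < n) {x : ℝ} (hx : x ≤ 0) :
    Fcdf ρ n x = 1 := by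
  obtain ⟨hsm, hnn, hsupp, hint⟩ := hρ n hn
  have hc : Continuous (ρ n) := hsm.continuous
  have h0 : (∫ s in x..(0:ℝ), ρ n s) = ∫ s in x..(0:ℝ), (0:ℝ) := by
    apply intervalIntegral.integral_congr_ae
    filter_upwards [ae_ne_real' 0] with s hs0 hs
    rw [Set.uIoc_of_le hx] at hs
    exact hsupp s (fun hmem => hs0 (le_antisymm hs.2 hmem.1))
  have h1 : (∫ s in x..(0:ℝ), ρ n s) + ∫ s in (0:ℝ)..(1/(n:ℝ)), ρ n s
      = ∫ s in x..(1/(n:ℝ)), ρ n s :=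
    intervalIntegral.integral_add_adjacent_intervals (hc.intervalIntegrable _ _)
      (hc.intervalIntegrable _ _)
  rw [Fcdf, ← h1, h0, hint]
  simp

lemma Fcdf_nonneg (hρ : IsDeltaSeq ρ) (hn : 0 < n) (x : ℝ) : 0 ≤ Fcdf ρ n x := by
  rcases le_total x (1/(n:ℝ)) with hx | hx
  · obtain ⟨hsm, hnn, hsupp, hint⟩ := hρ n hn
    exact intervalIntegral.integral_nonneg hx fun s _ => hnn s
  · rw [Fcdf_eq_zero hρ hn hx]

lemma Fcdf_le_one (hρ : IsDeltaSeq ρ) (hn : 0 < n) (x : ℝ) : Fcdf ρ n x ≤ 1 := by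
  rcases le_total x 0 with hx | hx
  · rw [Fcdf_eq_one hρ hn hx]
  · have h0 : Fcdf ρ n 0 = 1 := Fcdf_eq_one hρ hn le_rfl
    calc Fcdf ρ n x ≤ Fcdf ρ n 0 := Fcdf_antitone hρ hn hx
    _ = 1 := h0

lemma Fcdf_char (hρ : IsDeltaSeq ρ) (hn : 0 < n) {u : ℝ} (hu0 : 0 < u) (hu1 : u ≤ 1) :
    Fcdf ρ n (sSup {x : ℝ | Fcdf ρ n x = u}) = u ∧
    sSup {x : ℝ | Fcdf ρ n x = u} < 1/(n:ℝ) ∧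
    ∀ x, (u ≤ Fcdf ρ n x ↔ x ≤ sSup {x : ℝ | Fcdf ρ n x = u}) := by
  have hLpos : (0:ℝ) < 1/(n:ℝ) := by positivity
  have hcont := Fcdf_continuous hρ hn
  have hanti := Fcdf_antitone hρ hn
  set S := {x : ℝ | Fcdf ρ n x = u} with hS
  have hne : S.Nonempty := by
    have h1 : Fcdf ρ n 0 = 1 := Fcdf_eq_one hρ hn le_rfl
    have h2 : Fcdf ρ n (1/(n:ℝ)) = 0 := Fcdf_eq_zero hρ hn le_rfl
    have := intermediate_value_Icc' hLpos.le hcont.continuousOn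
    rw [h1, h2] at this
    obtain ⟨x, _, hx⟩ := this ⟨hu0.le, hu1⟩
    exact ⟨x, hx⟩
  have hub : ∀ x ∈ S, x ≤ 1/(n:ℝ) := by
    intro x hx
    by_contra hlt
    push_neg at hlt
    have := Fcdf_eq_zero hρ hn hlt.le
    rw [hS, mem_setOf_eq, this] at hx
    linarith
  have hbdd : BddAbove S := ⟨1/(n:ℝ), hub⟩
  have hclosed : IsClosed S := isClosed_eq hcont continuous_const
  have hcmem : sSup S ∈ S := hclosed.csSup_mem hne hbdd
  have hFc : Fcdf ρ n (sSup S) = u := hcmem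
  have hlt : sSup S < 1/(n:ℝ) := by
    rcases lt_or_eq_of_le (csSup_le hne hub) with h | h
    · exact h
    · exact absurd hFc (by rw [h, Fcdf_eq_zero hρ hn le_rfl]; linarith)
  refine ⟨hFc, hlt, fun x => ⟨fun hx => ?_, fun hx => hFc ▸ hanti hx⟩⟩
  by_contra hgt
  push_neg at hgt
  have h1 : Fcdf ρ n x ≤ u := hFc ▸ hanti hgt.le
  have h2 : x ∈ S := le_antisymm h1 hx
  exact absurd (le_csSup hbdd h2) (not_le.2 hgt)

lemma stepOf_eq_aux (F : ℝ → ℝ) {c h y u : ℝ} (hh : 0 < h) (hu : u ≠ 0)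
    (hchar : ∀ x, u ≤ F x ↔ x ≤ c) (hcy : c < y) :
    stepOf (fun k : ℕ => F (y - (k:ℝ) * h)) u = F (c - Int.fract ((c - y) / h) * h) := by
  set K : ℤ := ⌈(y - c) / h⌉ with hK
  have hKpos : 0 < K := Int.ceil_pos.2 (div_pos (by linarith) hh)
  have hKle : (y - c)/h ≤ (K:ℝ) := Int.le_ceil _
  have hKR : (K.toNat : ℝ) = (K:ℝ) := by
    exact_mod_cast Int.toNat_of_nonneg hKpos.le
  have hmem : K.toNat ∈ {k : ℕ | u ≤ F (y - (k:ℝ) * h)} := by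
    rw [mem_setOf_eq, hchar, hKR]
    have : (y - c) ≤ (K:ℝ) * h := by
      rw [div_le_iff₀ hh] at hKle; linarith
    linarith
  have hleast : ∀ k ∈ {k : ℕ | u ≤ F (y - (k:ℝ) * h)}, K.toNat ≤ k := by
    intro k hk
    rw [mem_setOf_eq, hchar] at hk
    have h1 : (y - c)/h ≤ (k:ℝ) := by rw [div_le_iff₀ hh]; linarith
    have h2 : K ≤ (k:ℤ) := Int.ceil_le.2 (by exact_mod_cast h1)
    omega
  have hsinf : sInf {k : ℕ | u ≤ F (y - (k:ℝ) * h)} = K.toNat :=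
    le_antisymm (Nat.sInf_le hmem) (le_csInf ⟨_, hmem⟩ hleast)
  rw [stepOf, if_neg hu, hsinf]
  congr 1
  have hfl : ((⌊(c - y)/h⌋ : ℤ) : ℝ) = -(K:ℝ) := by
    have : ⌊(c - y)/h⌋ = -K := by
      rw [hK, ← Int.floor_neg]; congr 1; ring
    rw [this]; push_cast; ring
  rw [Int.fract, hfl, hKR]
  field_simp
  ring

lemma fract_arg_eq {L0 a hn ζ cc t : ℝ} (hh : hn ≠ 0) :
    Int.fract ((cc - (ζ - (a + hn * Int.fract ((t - a) / hn)) -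
        hn * (⌊(ζ - L0 - (a + hn * Int.fract ((t - a) / hn))) / hn⌋ : ℤ))) / hn)
      = Int.fract ((t - (ζ - cc)) / hn) := by
  set τ := a + hn * Int.fract ((t - a) / hn) with hτ
  set j : ℤ := ⌊(ζ - L0 - τ) / hn⌋ with hj
  have harg : (cc - (ζ - τ - hn * j)) / hn
      = (t - (ζ - cc)) / hn + ((j - ⌊(t - a)/hn⌋ : ℤ) : ℝ) := by
    rw [hτ, Int.fract]
    push_cast
    field_simp
    ring
  rw [harg, Int.fract_add_intCast]

lemma periodize {g : ℝ → ℝ} {C : ℝ} (hgm : Measurable g) (hg0 : ∀ x, 0 ≤ g x)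
    (hgC : ∀ x, g x ≤ C) (β hT a b : ℝ) (hh : 0 < hT) (hab : a ≤ b) :
    ∫ t in Set.Icc a b, g (Int.fract ((t - β) / hT))
      ≤ (b - a + 2 * hT) * ∫ δ in (0:ℝ)..1, g δ := by
  set f : ℝ → ℝ := fun t => g (Int.fract ((t - β) / hT)) with hf
  have hfm : Measurable f := hgm.comp ((measurable_id.sub_const β).div_const hT).fract
  have hf0 : ∀ t, 0 ≤ f t := fun t => hg0 _
  have hfC : ∀ t, f t ≤ C := fun t => hgC _
  have hC0 : 0 ≤ C := le_trans (hg0 0) (hgC 0)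
  have hper : Function.Periodic f hT := by
    intro t
    simp only [hf]
    have : (t + hT - β) / hT = (t - β) / hT + 1 := by field_simp; ring
    rw [this, Int.fract_add_one]
  have hfi : ∀ t₁ t₂ : ℝ, IntervalIntegrable f volume t₁ t₂ := by
    intro t₁ t₂
    rw [intervalIntegrable_iff]
    refine Integrable.mono' (g := fun _ => C) ?_ hfm.aestronglyMeasurable ?_
    · exact integrableOn_const measure_Ioc_lt_top.ne
    · filter_upwards with t
      rw [Real.norm_eq_abs, abs_of_nonneg (hf0 t)]
      exact hfC t
  have hfiOn : ∀ s : Set ℝ, MeasurableSet s → volume s < ⊤ → IntegrableOn f s := by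
    intro s hs hvol
    refine Integrable.mono' (g := fun _ => C) ?_ hfm.aestronglyMeasurable ?_
    · exact integrableOn_const hvol.ne
    · filter_upwards with t
      rw [Real.norm_eq_abs, abs_of_nonneg (hf0 t)]
      exact hfC t
  set M₁ : ℤ := ⌊(a - β)/hT⌋ with hM₁
  set M₂ : ℤ := ⌊(b - β)/hT⌋ + 1 with hM₂
  set A : ℝ := β + M₁ * hT with hA
  set B : ℝ := β + M₂ * hT with hB
  have e1 : (a - β)/hT * hT = a - β := div_mul_cancel₀ _ hh.ne'
  have e2 : (b - β)/hT * hT = b - β := div_mul_cancel₀ _ hh.ne'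
  have hM₁le : (M₁ : ℝ) ≤ (a - β)/hT := Int.floor_le _
  have hM₁gt : (a - β)/hT - 1 < (M₁ : ℝ) := Int.sub_one_lt_floor _
  have hM₂gt : (b - β)/hT < (M₂ : ℝ) := by
    rw [hM₂]; push_cast; exact Int.lt_floor_add_one _
  have hM₂le : (M₂ : ℝ) ≤ (b - β)/hT + 1 := by
    rw [hM₂]; push_cast
    have : ((⌊(b - β)/hT⌋ : ℤ) : ℝ) ≤ (b - β)/hT := Int.floor_le _
    linarith
  have hAa : A ≤ a := by
    rw [hA]
    nlinarith [mul_le_mul_of_nonneg_right hM₁le hh.le]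
  have hbB : b ≤ B := by
    rw [hB]
    nlinarith [mul_le_mul_of_nonneg_right hM₂gt.le hh.le]
  have hM₁₂ : M₁ ≤ M₂ := by
    have h1 : (M₁:ℝ) < (M₂:ℝ) := by
      have : (a - β)/hT ≤ (b - β)/hT := by gcongr <;> linarith
      linarith
    exact_mod_cast h1.le
  have hAB : A ≤ B := by
    rw [hA, hB]
    have : (M₁:ℝ) ≤ (M₂:ℝ) := by exact_mod_cast hM₁₂
    nlinarith
  have step1 : ∫ t in Set.Icc a b, f t ≤ ∫ t in Set.Icc A B, f t := by
    apply setIntegral_mono_set (hfiOn _ measurableSet_Icc measure_Icc_lt_top)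
      (Filter.Eventually.of_forall hf0)
    exact (Set.Icc_subset_Icc hAa hbB).eventuallyLE
  have step2 : ∫ t in Set.Icc A B, f t = ∫ t in A..B, f t := by
    rw [intervalIntegral.integral_of_le hAB, integral_Icc_eq_integral_Ioc]
  have hBA : B = A + (M₂ - M₁) • hT := by
    rw [hA, hB, zsmul_eq_mul]; push_cast; ring
  have step3 : ∫ t in A..B, f t = (M₂ - M₁) • ∫ t in A..(A + hT), f t := by
    rw [hBA]
    exact hper.intervalIntegral_add_zsmul_eq (M₂ - M₁) A hfi
  have step4 : ∫ t in A..(A+hT), f t = ∫ t in β..(β+hT), f t :=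
    hper.intervalIntegral_add_eq A β
  have step5 : ∫ t in β..(β+hT), f t = ∫ s in (0:ℝ)..hT, g (Int.fract (s / hT)) := by
    have := intervalIntegral.integral_comp_sub_right
      (a := β) (b := β + hT) (fun s => g (Int.fract (s / hT))) β
    simpa using this
  have step6 : ∫ s in (0:ℝ)..hT, g (Int.fract (s / hT)) = ∫ s in (0:ℝ)..hT, g (s / hT) := by
    apply intervalIntegral.integral_congr_ae
    filter_upwards [ae_ne_real' hT] with s hsne hs
    rw [Set.uIoc_of_le hh.le] at hs
    congr 1
    exact Int.fract_eq_self.2 ⟨le_of_lt (div_pos hs.1 hh),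
      (div_lt_one hh).2 (lt_of_le_of_ne hs.2 hsne)⟩
  have step7 : ∫ s in (0:ℝ)..hT, g (s / hT) = hT * ∫ δ in (0:ℝ)..1, g δ := by
    rw [intervalIntegral.integral_comp_div (c := hT) hh.ne' (f := g)]
    rw [zero_div, div_self hh.ne', smul_eq_mul]
  have hint01 : 0 ≤ ∫ δ in (0:ℝ)..1, g δ :=
    intervalIntegral.integral_nonneg zero_le_one fun x _ => hg0 x
  have hcount : ((M₂ - M₁ : ℤ) : ℝ) * hT ≤ b - a + 2 * hT := by
    push_cast
    nlinarith [mul_le_mul_of_nonneg_right hM₂le hh.le,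
      mul_le_mul_of_nonneg_right hM₁gt.le hh.le]
  calc ∫ t in Set.Icc a b, f t ≤ ∫ t in Set.Icc A B, f t := step1
    _ = ((M₂ - M₁:ℤ):ℝ) * (hT * ∫ δ in (0:ℝ)..1, g δ) := by
        rw [step2, step3, step4, step5, step6, step7, zsmul_eq_mul]
    _ ≤ (b - a + 2*hT) * ∫ δ in (0:ℝ)..1, g δ := by
        nlinarith [mul_le_mul_of_nonneg_right hcount hint01]

end AuxLemmas

/-- Lemma 4.4, direct part: pointwise convergence of
`F_n(F_n^{-1}(u) - δ h_n)` to `σ(u)` implies `L¹(T)`-convergence of the step functions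
`σ^n(u,t)` built from the grid `ξ_k^n(t) = F_n(ζ - t_{j+k})` to `σ(u)`, at every
continuity point `u` of `σ`. -/
theorem step_functions_from_Fn_converge
    (a b : ℝ) (hab : a < b)
    (ρ : ℕ → ℝ → ℝ) (hρ : IsDeltaSeq ρ)
    (h : ℕ → ℝ) (hh : ∀ n, 0 < h n) (hh0 : Tendsto h atTop (𝓝 0))
    (ζ : ℝ) (hζ : ζ ∈ Set.Icc a b)
    (σ : ℝ → ℝ)
    (hσconv : ∀ δ ∈ Set.Ioo (0 : ℝ) 1, ∀ u ∈ Set.Icc (0 : ℝ) 1,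
      ContinuousWithinAt σ (Set.Icc 0 1) u →
      Tendsto (fun n => FcdfE ρ n (FcdfInv ρ n u - ((δ * h n : ℝ) : EReal)))
        atTop (𝓝 (σ u))) :
    ∀ u ∈ Set.Icc (0 : ℝ) 1, ContinuousWithinAt σ (Set.Icc 0 1) u →
      Tendsto (fun n => ∫ t in Set.Icc a b,
          |stepOf (fun k => Fcdf ρ n (ζ - (tauPt a (h n) t + h n *
            ((⌊(ζ - 1 / (n : ℝ) - tauPt a (h n) t) / h n⌋ : ℝ) + (k : ℝ))))) u - σ u|)
        atTop (𝓝 0) := by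
  intro u hu hcu
  by_cases hu0 : u = 0
  · subst hu0
    have hσ0 : σ 0 = 0 := by
      have h1 := hσconv (1/2) (by constructor <;> norm_num) 0 hu hcu
      have h2 : ∀ n : ℕ, FcdfE ρ n (FcdfInv ρ n 0 - ((1/2 * h n : ℝ) : EReal)) = 0 := by
        intro n
        have htop : FcdfInv ρ n 0 = ⊤ := by
          rw [FcdfInv, eq_top_iff]
          apply le_sSup
          simp [FcdfE]
        rw [htop, EReal.top_sub_coe]
        simp [FcdfE]
      have h3 : Tendsto (fun _ : ℕ => (0:ℝ)) atTop (𝓝 (σ 0)) := by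
        refine h1.congr fun n => ?_
        rw [h2 n]
      exact tendsto_nhds_unique h3 tendsto_const_nhds
    have hz : ∀ n : ℕ, (∫ t in Set.Icc a b,
        |stepOf (fun k => Fcdf ρ n (ζ - (tauPt a (h n) t + h n *
          ((⌊(ζ - 1 / (n : ℝ) - tauPt a (h n) t) / h n⌋ : ℝ) + (k : ℝ))))) 0 - σ 0|) = 0 := by
      intro n
      simp [stepOf, hσ0]
    simpa only [hz] using tendsto_const_nhds
  · have hu0' : 0 < u := hu.1.lt_of_ne (Ne.symm hu0)
    set c : ℕ → ℝ := fun n => sSup {x : ℝ | Fcdf ρ n x = u} with hc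
    have hchar : ∀ n : ℕ, 0 < n → (Fcdf ρ n (c n) = u ∧ c n < 1/(n:ℝ) ∧
        ∀ x, (u ≤ Fcdf ρ n x ↔ x ≤ c n)) := fun n hn => Fcdf_char hρ hn hu0' hu.2
    set gf : ℕ → ℝ → ℝ := fun n δ => |Fcdf ρ n (c n - δ * h n) - σ u| with hgf
    have hgfcont : ∀ n : ℕ, 0 < n → Continuous (gf n) := by
      intro n hn
      exact (((Fcdf_continuous hρ hn).comp
        (continuous_const.sub (continuous_id.mul continuous_const))).sub continuous_const).abs
    have hgf0 : ∀ n δ, 0 ≤ gf n δ := fun n δ => abs_nonneg _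
    have hgfC : ∀ n : ℕ, 0 < n → ∀ δ, gf n δ ≤ 1 + |σ u| := by
      intro n hn δ
      have h1 := Fcdf_nonneg hρ hn (c n - δ * h n)
      have h2 := Fcdf_le_one hρ hn (c n - δ * h n)
      calc gf n δ ≤ |Fcdf ρ n (c n - δ * h n)| + |σ u| := abs_sub _ _
        _ ≤ 1 + |σ u| := by rw [abs_of_nonneg h1]; linarith
    have key : ∀ n : ℕ, 0 < n → ∀ t : ℝ,
        |stepOf (fun k => Fcdf ρ n (ζ - (tauPt a (h n) t + h n *
            ((⌊(ζ - 1 / (n : ℝ) - tauPt a (h n) t) / h n⌋ : ℝ) + (k : ℝ))))) u - σ u|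
          = gf n (Int.fract ((t - (ζ - c n)) / h n)) := by
      intro n hn t
      obtain ⟨hFc, hclt, hch⟩ := hchar n hn
      set τ : ℝ := tauPt a (h n) t with hτ
      set j : ℤ := ⌊(ζ - 1 / (n:ℝ) - τ) / h n⌋ with hj
      set y : ℝ := ζ - τ - h n * j with hy
      have hξ : (fun k : ℕ => Fcdf ρ n (ζ - (τ + h n * ((j:ℝ) + (k:ℝ)))))
          = fun k : ℕ => Fcdf ρ n (y - (k:ℝ) * h n) := by
        funext k; congr 1; rw [hy]; ring
      have hyL : 1/(n:ℝ) ≤ y := by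
        have h1 : (j:ℝ) ≤ (ζ - 1/(n:ℝ) - τ)/h n := Int.floor_le _
        have h2 := mul_le_mul_of_nonneg_right h1 (hh n).le
        rw [div_mul_cancel₀ _ (hh n).ne'] at h2
        rw [hy]; linarith
      have hcy : c n < y := lt_of_lt_of_le hclt hyL
      rw [hξ, stepOf_eq_aux (Fcdf ρ n) (hh n) hu0 hch hcy]
      have hfr : Int.fract ((c n - y) / h n) = Int.fract ((t - (ζ - c n)) / h n) := by
        rw [hy, hj, hτ, tauPt]
        exact fract_arg_eq (hh n).ne'
      rw [hgf, hfr]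
    have hcinv : ∀ n : ℕ, 0 < n → FcdfInv ρ n u = ((c n : ℝ) : EReal) := by
      intro n hn
      obtain ⟨hFc, hclt, hch⟩ := hchar n hn
      rw [FcdfInv]
      apply le_antisymm
      · apply sSup_le
        intro x hx
        revert hx
        induction x using EReal.rec with
        | bot => exact fun _ => bot_le
        | coe r =>
          intro hx
          have hr : Fcdf ρ n r = u := by
            simpa [FcdfE] using hx
          have : r ≤ c n := (hch r).1 hr.ge
          exact_mod_cast this
        | top =>
          intro hx
          exfalso
          have : (0:ℝ) = u := by simpa [FcdfE] using hx
          linarith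
      · apply le_sSup
        simp [FcdfE, hFc]
    have hJ : Tendsto (fun n => ∫ δ in Set.Ioc (0:ℝ) 1, gf (n+1) δ) atTop (𝓝 0) := by
      have hdct := tendsto_integral_of_dominated_convergence
        (μ := volume.restrict (Set.Ioc (0:ℝ) 1)) (F := fun n δ => gf (n+1) δ)
        (f := fun _ => (0:ℝ)) (bound := fun _ => 1 + |σ u|)
        (fun n => ((hgfcont (n+1) n.succ_pos).aestronglyMeasurable))
        (integrableOn_const measure_Ioc_lt_top.ne)
        (fun n => by
          filter_upwards with δ
          rw [Real.norm_eq_abs, abs_of_nonneg (hgf0 (n+1) δ)]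
          exact hgfC (n+1) n.succ_pos δ)
        (by
          filter_upwards [ae_restrict_mem measurableSet_Ioc,
            ae_restrict_of_ae (ae_ne_real' 1)] with δ hδ hδ1
          have hδoo : δ ∈ Set.Ioo (0:ℝ) 1 := ⟨hδ.1, hδ.2.lt_of_ne hδ1⟩
          have hbase := hσconv δ hδoo u hu hcu
          have hshift := hbase.comp (tendsto_add_atTop_nat 1)
          have hF : Tendsto (fun m => Fcdf ρ (m+1) (c (m+1) - δ * h (m+1)))
              atTop (𝓝 (σ u)) := by
            refine hshift.congr fun m => ?_
            show FcdfE ρ (m+1) (FcdfInv ρ (m+1) u - ((δ * h (m+1) : ℝ) : EReal))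
              = Fcdf ρ (m+1) (c (m+1) - δ * h (m+1))
            rw [hcinv (m+1) m.succ_pos]
            have hcoe : ((c (m+1) : ℝ) : EReal) - ((δ * h (m+1) : ℝ) : EReal)
                = ((c (m+1) - δ * h (m+1) : ℝ) : EReal) := (EReal.coe_sub _ _).symm
            rw [hcoe, FcdfE, if_neg (EReal.coe_ne_top _), if_neg (EReal.coe_ne_bot _),
              EReal.toReal_coe]
          have habs := (hF.sub_const (σ u)).abs
          simpa [hgf] using habs)
      simpa using hdct
    have hh1 : Tendsto (fun n => h (n+1)) atTop (𝓝 0) := hh0.comp (tendsto_add_atTop_nat 1)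
    have hRHS : Tendsto (fun n => (b - a + 2 * h (n+1)) * ∫ δ in Set.Ioc (0:ℝ) 1, gf (n+1) δ)
        atTop (𝓝 0) := by
      have := ((tendsto_const_nhds (x := b - a) (f := (atTop : Filter ℕ))).add
        (hh1.const_mul 2)).mul hJ
      simpa using this
    apply (tendsto_add_atTop_iff_nat 1).1
    apply squeeze_zero (fun n => integral_nonneg fun t => abs_nonneg _) ?_ hRHS
    intro n
    have hkey := key (n+1) n.succ_pos
    have hre : (∫ t in Set.Icc a b,
        |stepOf (fun k => Fcdf ρ (n+1) (ζ - (tauPt a (h (n+1)) t + h (n+1) *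
          ((⌊(ζ - 1 / ((n+1 : ℕ) : ℝ) - tauPt a (h (n+1)) t) / h (n+1)⌋ : ℝ) + (k : ℝ))))) u - σ u|)
        = ∫ t in Set.Icc a b, gf (n+1) (Int.fract ((t - (ζ - c (n+1))) / h (n+1))) :=
      integral_congr_ae (Filter.Eventually.of_forall fun t => hkey t)
    rw [hre]
    have hper := periodize (g := gf (n+1)) (C := 1 + |σ u|)
      (hgfcont (n+1) n.succ_pos).measurable (hgf0 (n+1)) (hgfC (n+1) n.succ_pos)
      (ζ - c (n+1)) (h (n+1)) a b (hh (n+1)) hab.le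
    rwa [intervalIntegral.integral_of_le zero_le_one] at hper
end
end

section
/- There exists a constant C, depending only on the Lipschitz constant M of f, the growth constant K, the length b − a, and the total variation V_a^b L, such that for every n ∈ ℕ and every t ∈ T the solution x_n of the difference scheme satisfies |x_n(t)| ≤ C(1 + |x_n^0(τ_t)|). -/
open MeasureTheory Filter Set Topology

noncomputable section

/-- A right-continuous real function is measurable. -/
lemma measurable_of_rightCont (L : ℝ → ℝ) (hL : ∀ t, ContinuousWithinAt L (Set.Ici t) t) :
    Measurable L := by
  have hmeas : ∀ k : ℕ, Measurable (fun t : ℝ => L ((⌈t * 2 ^ k⌉ : ℝ) / 2 ^ k)) := by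
    intro k
    exact (measurable_from_top (f := fun z : ℤ => L ((z : ℝ) / 2 ^ k))).comp
      (Int.measurable_ceil.comp (measurable_id.mul_const _))
  apply measurable_of_tendsto_metrizable hmeas
  rw [tendsto_pi_nhds]
  intro t
  have h1 : Tendsto (fun k : ℕ => ((⌈t * 2 ^ k⌉ : ℝ) / 2 ^ k)) atTop (𝓝[Set.Ici t] t) := by
    apply tendsto_nhdsWithin_of_tendsto_nhds_of_eventually_within
    · have hupper : ∀ k : ℕ, ((⌈t * 2 ^ k⌉ : ℝ) / 2 ^ k) ≤ t + (1/2 : ℝ) ^ k := by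
        intro k
        rw [div_le_iff₀ (by positivity)]
        have := (Int.ceil_lt_add_one (t * 2 ^ k)).le
        have h2 : ((1:ℝ)/2) ^ k * 2 ^ k = 1 := by
          rw [← mul_pow]; norm_num
        nlinarith [this]
      have hlower : ∀ k : ℕ, t ≤ ((⌈t * 2 ^ k⌉ : ℝ) / 2 ^ k) := by
        intro k
        rw [le_div_iff₀ (by positivity)]
        exact Int.le_ceil _
      have htend : Tendsto (fun k : ℕ => t + (1/2 : ℝ) ^ k) atTop (𝓝 (t + 0)) :=
        tendsto_const_nhds.add (tendsto_pow_atTop_nhds_zero_of_lt_one (by norm_num) (by norm_num))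
      rw [add_zero] at htend
      exact tendsto_of_tendsto_of_tendsto_of_le_of_le tendsto_const_nhds htend hlower hupper
    · filter_upwards with k
      rw [Set.mem_Ici, le_div_iff₀ (by positivity)]
      exact Int.le_ceil _
  exact (hL t).tendsto.comp h1

/-- Clamping to `[a,b]` doesn't change `L`. -/
lemma clamp_eq (a b : ℝ) (hab : a ≤ b) (L : ℝ → ℝ)
    (hla : ∀ t, t ≤ a → L t = L a) (hlb : ∀ t, b ≤ t → L t = L b) (x : ℝ) :
    L (max a (min x b)) = L x := by
  rcases le_total x a with h | h
  · rw [min_eq_left (h.trans hab), max_eq_left h, hla x h]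
  · rcases le_total b x with h2 | h2
    · rw [min_eq_right h2, max_eq_right hab, hlb x h2]
    · rw [min_eq_left h2, max_eq_right h]

lemma clamp_mem (a b : ℝ) (hab : a ≤ b) (x : ℝ) : max a (min x b) ∈ Set.Icc a b :=
  ⟨le_max_left _ _, max_le hab (min_le_right _ _)⟩

/-- Sums of increments of `L` along any monotone sequence are bounded by the variation. -/
lemma sum_abs_le_var (a b : ℝ) (hab : a ≤ b) (L : ℝ → ℝ)
    (hVar : BoundedVariationOn L (Set.Icc a b))
    (hla : ∀ t, t ≤ a → L t = L a) (hlb : ∀ t, b ≤ t → L t = L b)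
    (u : ℕ → ℝ) (hu : Monotone u) (m : ℕ) :
    ∑ k ∈ Finset.range m, |L (u (k+1)) - L (u k)| ≤ (eVariationOn L (Set.Icc a b)).toReal := by
  set c : ℝ → ℝ := fun x => max a (min x b) with hc
  have hcm : Monotone (fun k => c (u k)) := fun i j hij =>
    max_le_max le_rfl (min_le_min (hu hij) le_rfl)
  have hmem : ∀ k, c (u k) ∈ Set.Icc a b := fun k => clamp_mem a b hab _
  have h1 := eVariationOn.sum_le (f := L) (n := m) hcm hmem
  have h2 : ∑ k ∈ Finset.range m, |L (u (k+1)) - L (u k)|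
      = (∑ k ∈ Finset.range m, edist (L (c (u (k+1)))) (L (c (u k)))).toReal := by
    rw [ENNReal.toReal_sum (fun k _ => by rw [edist_dist]; exact ENNReal.ofReal_ne_top)]
    refine Finset.sum_congr rfl fun k _ => ?_
    rw [clamp_eq a b hab L hla hlb, clamp_eq a b hab L hla hlb, edist_dist, Real.dist_eq,
      ENNReal.toReal_ofReal (abs_nonneg _)]
  rw [h2]
  exact ENNReal.toReal_mono hVar h1

/-- `L` is bounded by `|L a| + V`. -/
lemma abs_L_le (a b : ℝ) (hab : a ≤ b) (L : ℝ → ℝ)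
    (hVar : BoundedVariationOn L (Set.Icc a b))
    (hla : ∀ t, t ≤ a → L t = L a) (hlb : ∀ t, b ≤ t → L t = L b) (x : ℝ) :
    |L x| ≤ |L a| + (eVariationOn L (Set.Icc a b)).toReal := by
  have h1 := eVariationOn.edist_le L (clamp_mem a b hab x) (clamp_mem a b hab a)
  rw [clamp_eq a b hab L hla hlb, clamp_eq a b hab L hla hlb, edist_dist, Real.dist_eq] at h1
  have h2 : |L x - L a| ≤ (eVariationOn L (Set.Icc a b)).toReal := by
    rw [← ENNReal.toReal_ofReal (abs_nonneg (L x - L a))]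
    exact ENNReal.toReal_mono hVar h1
  calc |L x| = |L a + (L x - L a)| := by ring_nf
    _ ≤ |L a| + |L x - L a| := abs_add_le _ _
    _ ≤ _ := by linarith


/-- Bound on the mollified `f`. -/
lemma mollF_bound (K : ℝ) (hK : 0 ≤ K) (f : ℝ → ℝ → ℝ)
    (hfc : Continuous (fun p : ℝ × ℝ => f p.1 p.2))
    (hgrow : ∀ t x, |f t x| ≤ K * (1 + |x|))
    (ρ₂ : ℕ → ℝ → ℝ → ℝ) (hρ₂ : IsDeltaSeq2 ρ₂) (n : ℕ) (t x : ℝ) :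
    |mollF f ρ₂ n t x| ≤ 2 * K * (1 + |x|) := by
  have hRHS : (0:ℝ) ≤ 2*K*(1+|x|) := by positivity
  rcases Nat.eq_zero_or_pos n with rfl | hn
  · simp only [mollF, Nat.cast_zero, div_zero, intervalIntegral.integral_same]
    simpa using hRHS
  obtain ⟨hsm2, hnn2, hsupp2, hint2⟩ := hρ₂ n hn
  have hρc : Continuous (fun p : ℝ × ℝ => ρ₂ n p.1 p.2) := hsm2.continuous
  have hnpos : (0:ℝ) < (n:ℝ) := by exact_mod_cast hn
  have hin : (0:ℝ) ≤ 1/(n:ℝ) := by positivity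
  have hle1 : (1:ℝ)/(n:ℝ) ≤ 1 := by
    rw [div_le_one hnpos]; exact_mod_cast hn
  set c := K * (2 + |x|) with hc
  have hc0 : 0 ≤ c := by positivity
  have hpt : ∀ u v : ℝ, v ∈ Set.Icc (0:ℝ) (1/(n:ℝ)) →
      |f (t+u) (x+v) * ρ₂ n u v| ≤ c * ρ₂ n u v := by
    intro u v hv
    rw [abs_mul, abs_of_nonneg (hnn2 u v)]
    refine mul_le_mul_of_nonneg_right ((hgrow _ _).trans ?_) (hnn2 u v)
    have h1 : |x + v| ≤ |x| + 1 := (abs_add_le _ _).trans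
      (by rw [abs_of_nonneg hv.1]; linarith [hv.2, hle1])
    rw [hc]; nlinarith
  set R : ℝ → ℝ := fun u => ∫ v in (0:ℝ)..(1/(n:ℝ)), ρ₂ n u v with hR
  set G : ℝ → ℝ := fun u => ∫ v in (0:ℝ)..(1/(n:ℝ)), f (t+u) (x+v) * ρ₂ n u v with hG
  have hGc' : Continuous (fun p : ℝ × ℝ => f (t+p.1) (x+p.2) * ρ₂ n p.1 p.2) :=
    (hfc.comp ((continuous_const.add continuous_fst).prodMk
      (continuous_const.add continuous_snd))).mul hρc
  have hGc : Continuous G := by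
    apply intervalIntegral.continuous_parametric_intervalIntegral_of_continuous'
    exact hGc'
  have hRc : Continuous R := by
    apply intervalIntegral.continuous_parametric_intervalIntegral_of_continuous'
    exact hρc
  have hGR : ∀ u, |G u| ≤ c * R u := by
    intro u
    have hcont1 : Continuous (fun v => f (t+u) (x+v) * ρ₂ n u v) :=
      hGc'.comp (continuous_const.prodMk continuous_id)
    have hcont2 : Continuous (fun v => ρ₂ n u v) :=
      hρc.comp (continuous_const.prodMk continuous_id)
    calc |G u| ≤ ∫ v in (0:ℝ)..(1/(n:ℝ)), |f (t+u) (x+v) * ρ₂ n u v| :=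
          intervalIntegral.abs_integral_le_integral_abs hin
      _ ≤ ∫ v in (0:ℝ)..(1/(n:ℝ)), c * ρ₂ n u v := by
          refine intervalIntegral.integral_mono_on hin
            (hcont1.abs.intervalIntegrable _ _)
            ((continuous_const.mul hcont2).intervalIntegrable _ _)
            (fun v hv => hpt u v hv)
      _ = c * R u := by rw [hR]; exact intervalIntegral.integral_const_mul c _
  calc |mollF f ρ₂ n t x| ≤ ∫ u in (0:ℝ)..(1/(n:ℝ)), |G u| :=
        intervalIntegral.abs_integral_le_integral_abs hin
    _ ≤ ∫ u in (0:ℝ)..(1/(n:ℝ)), c * R u := by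
        refine intervalIntegral.integral_mono_on hin
          (hGc.abs.intervalIntegrable _ _)
          ((continuous_const.mul hRc).intervalIntegrable _ _)
          (fun u _ => hGR u)
    _ = c * ∫ u in (0:ℝ)..(1/(n:ℝ)), R u := intervalIntegral.integral_const_mul c _
    _ = c := by rw [hR, hint2, mul_one]
    _ ≤ 2*K*(1+|x|) := by rw [hc]; nlinarith [abs_nonneg x]

set_option maxHeartbeats 1000000 in
/-- The sum of mollified increments is bounded by the variation. -/
lemma mollL_sum_bound (a b : ℝ) (hab : a ≤ b) (L : ℝ → ℝ) (hLm : Measurable L)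
    (hVar : BoundedVariationOn L (Set.Icc a b))
    (hla : ∀ t, t ≤ a → L t = L a) (hlb : ∀ t, b ≤ t → L t = L b)
    (ρ : ℕ → ℝ → ℝ) (hρ : IsDeltaSeq ρ) (n : ℕ)
    (τ h : ℝ) (hh : 0 ≤ h) (m : ℕ) :
    ∑ k ∈ Finset.range m, |mollL L ρ n (τ + ((k:ℝ)+1)*h) - mollL L ρ n (τ + (k:ℝ)*h)|
      ≤ (eVariationOn L (Set.Icc a b)).toReal := by
  set V := (eVariationOn L (Set.Icc a b)).toReal with hVdef
  have hV0 : 0 ≤ V := ENNReal.toReal_nonneg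
  rcases Nat.eq_zero_or_pos n with rfl | hn
  · have : ∀ w : ℝ, mollL L ρ 0 w = 0 := by
      intro w; simp [mollL]
    simp [this, hV0]
  obtain ⟨hsm, hnn, hsupp, hint⟩ := hρ n hn
  have hρc : Continuous (ρ n) := hsm.continuous
  have hnpos : (0:ℝ) < (n:ℝ) := by exact_mod_cast hn
  have hin : (0:ℝ) ≤ 1/(n:ℝ) := by positivity
  set B := |L a| + V with hBdef
  have hB0 : 0 ≤ B := by
    have := abs_nonneg (L a); rw [hBdef]; linarith
  have hBle : ∀ y, |L y| ≤ B := fun y => abs_L_le a b hab L hVar hla hlb y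
  -- integrability of s ↦ L (w+s) * ρ n s
  have hInt1 : ∀ w : ℝ, IntervalIntegrable (fun s => L (w+s) * ρ n s) volume 0 (1/(n:ℝ)) := by
    intro w
    have hmeas : AEStronglyMeasurable (fun s => L (w+s) * ρ n s)
        (volume.restrict (Set.uIoc (0:ℝ) (1/(n:ℝ)))) :=
      ((hLm.comp (measurable_const.add measurable_id)).mul hρc.measurable).aestronglyMeasurable
    refine IntervalIntegrable.mono_fun'
      (g := fun s => B * ρ n s) ((continuous_const.mul hρc).intervalIntegrable _ _) hmeas ?_
    filter_upwards with s
    simp only [Real.norm_eq_abs, abs_mul]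
    rw [abs_of_nonneg (hnn s)]
    exact mul_le_mul_of_nonneg_right (hBle _) (hnn s)
  -- integrability of s ↦ |L (w'+s) - L (w+s)| * ρ n s
  have hInt2 : ∀ w w' : ℝ, IntervalIntegrable (fun s => |L (w'+s) - L (w+s)| * ρ n s)
      volume 0 (1/(n:ℝ)) := by
    intro w w'
    have hmeas : AEStronglyMeasurable (fun s => |L (w'+s) - L (w+s)| * ρ n s)
        (volume.restrict (Set.uIoc (0:ℝ) (1/(n:ℝ)))) :=
      ((((hLm.comp (measurable_const.add measurable_id)).sub
        (hLm.comp (measurable_const.add measurable_id))).abs).mul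
        hρc.measurable).aestronglyMeasurable
    refine IntervalIntegrable.mono_fun'
      (g := fun s => (2*B) * ρ n s) ((continuous_const.mul hρc).intervalIntegrable _ _) hmeas ?_
    filter_upwards with s
    simp only [Real.norm_eq_abs, abs_mul, abs_abs]
    rw [abs_of_nonneg (hnn s)]
    refine mul_le_mul_of_nonneg_right ?_ (hnn s)
    calc |L (w'+s) - L (w+s)| ≤ |L (w'+s)| + |L (w+s)| := abs_sub _ _
      _ ≤ 2*B := by linarith [hBle (w'+s), hBle (w+s)]
  -- the key pointwise diff bound
  have hdiff : ∀ w w' : ℝ, |mollL L ρ n w' - mollL L ρ n w|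
      ≤ ∫ s in (0:ℝ)..(1/(n:ℝ)), |L (w'+s) - L (w+s)| * ρ n s := by
    intro w w'
    have e1 : mollL L ρ n w' - mollL L ρ n w
        = ∫ s in (0:ℝ)..(1/(n:ℝ)), (L (w'+s) - L (w+s)) * ρ n s := by
      rw [mollL, mollL, ← intervalIntegral.integral_sub (hInt1 w') (hInt1 w)]
      congr 1; funext s; ring
    rw [e1]
    refine (intervalIntegral.abs_integral_le_integral_abs hin).trans_eq ?_
    congr 1; funext s
    rw [abs_mul, abs_of_nonneg (hnn s)]
  calc ∑ k ∈ Finset.range m, |mollL L ρ n (τ + ((k:ℝ)+1)*h) - mollL L ρ n (τ + (k:ℝ)*h)|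
      ≤ ∑ k ∈ Finset.range m, ∫ s in (0:ℝ)..(1/(n:ℝ)),
          |L (τ + ((k:ℝ)+1)*h + s) - L (τ + (k:ℝ)*h + s)| * ρ n s :=
        Finset.sum_le_sum (fun k _ => hdiff _ _)
    _ = ∫ s in (0:ℝ)..(1/(n:ℝ)),
          (∑ k ∈ Finset.range m, |L (τ + ((k:ℝ)+1)*h + s) - L (τ + (k:ℝ)*h + s)|) * ρ n s := by
        rw [← intervalIntegral.integral_finset_sum (fun k _ => hInt2 _ _)]
        congr 1; funext s; rw [Finset.sum_mul]
    _ ≤ ∫ s in (0:ℝ)..(1/(n:ℝ)), V * ρ n s := by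
        have hi1 : IntervalIntegrable (fun s => (∑ k ∈ Finset.range m,
            |L (τ + ((k:ℝ)+1)*h + s) - L (τ + (k:ℝ)*h + s)|) * ρ n s) volume 0 (1/(n:ℝ)) := by
          have := IntervalIntegrable.sum (μ := volume) (a := (0:ℝ)) (b := 1/(n:ℝ))
            (Finset.range m) (f := fun k s => |L (τ + ((k:ℝ)+1)*h + s) - L (τ + (k:ℝ)*h + s)| * ρ n s)
            (fun k _ => hInt2 _ _)
          refine this.congr ?_
          intro s _
          dsimp only
          rw [Finset.sum_apply, Finset.sum_mul]
        have hi2 : IntervalIntegrable (fun s => V * ρ n s) volume 0 (1/(n:ℝ)) :=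
          (continuous_const.mul hρc).intervalIntegrable _ _
        refine intervalIntegral.integral_mono_on hin hi1 hi2 ?_
        intro s _
        ·
          refine mul_le_mul_of_nonneg_right ?_ (hnn s)
          have hmono : Monotone (fun k : ℕ => τ + (k:ℝ)*h + s) := by
            intro i j hij
            have : (i:ℝ) * h ≤ (j:ℝ) * h :=
              mul_le_mul_of_nonneg_right (by exact_mod_cast hij) hh
            simp only []; linarith
          have := sum_abs_le_var a b hab L hVar hla hlb _ hmono m
          refine le_trans (le_of_eq ?_) this
          refine Finset.sum_congr rfl fun k _ => ?_
          push_cast; ring_nf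
    _ = V * ∫ s in (0:ℝ)..(1/(n:ℝ)), ρ n s := intervalIntegral.integral_const_mul V _
    _ = V := by rw [hint, mul_one]


/-- a bound `|x_n(t)| ≤ C (1+|x_n^0(τ_t)|)` for the solutions of the
difference scheme, with `C` depending only on `M`, `K`, `b-a` and `V_a^b L`. -/
theorem scheme_solution_bound :
    ∃ C : ℝ → ℝ → ℝ → ℝ → ℝ,
      ∀ (a b : ℝ), a < b →
      ∀ (L : ℝ → ℝ),
        (∀ t, ContinuousWithinAt L (Set.Ici t) t) →
        BoundedVariationOn L (Set.Icc a b) →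
        (∀ t, t ≤ a → L t = L a) → (∀ t, b ≤ t → L t = L b) →
      ∀ (M K : ℝ) (f : ℝ → ℝ → ℝ),
        (∀ t s x y : ℝ, |f t x - f s y| ≤ M * (|t - s| + |x - y|)) →
        (∀ t x : ℝ, |f t x| ≤ K * (1 + |x|)) →
      ∀ (ρ : ℕ → ℝ → ℝ), IsDeltaSeq ρ →
      ∀ (ρ₂ : ℕ → ℝ → ℝ → ℝ), IsDeltaSeq2 ρ₂ →
      ∀ (h : ℕ → ℝ), (∀ n, 0 < h n) → Tendsto h atTop (𝓝 0) →
      ∀ (xini X : ℕ → ℝ → ℝ),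
        (∀ n, ∀ t ∈ Set.Ico a (a + h n), X n t = xini n t) →
        (∀ n, ∀ t : ℝ, a ≤ t → X n (t + h n) =
          X n t + mollF f ρ₂ n t (X n t) * (mollL L ρ n (t + h n) - mollL L ρ n t)) →
      ∀ n : ℕ, ∀ t ∈ Set.Icc a b,
        |X n t| ≤ C M K (b - a) (eVariationOn L (Set.Icc a b)).toReal *
          (1 + |xini n (tauPt a (h n) t)|) := by
  refine ⟨fun M K d V => Real.exp (2*K*V), ?_⟩
  intro a b hab L hLrc hVar hla hlb M K f hLip hgrow ρ hρ ρ₂ hρ₂ h hh _ xini X hXini hXrec n t ht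
  set V := (eVariationOn L (Set.Icc a b)).toReal with hVdef
  have hV0 : 0 ≤ V := ENNReal.toReal_nonneg
  have hK : 0 ≤ K := by
    have h1 := hgrow 0 0
    simp only [abs_zero, add_zero, mul_one] at h1
    exact le_trans (abs_nonneg _) h1
  have hLm : Measurable L := measurable_of_rightCont L hLrc
  have hfc : Continuous (fun p : ℝ × ℝ => f p.1 p.2) := by
    have hlip : LipschitzWith (Real.toNNReal (2*|M|)) (fun p : ℝ × ℝ => f p.1 p.2) := by
      apply LipschitzWith.of_dist_le_mul
      intro p q
      have h1 := hLip p.1 q.1 p.2 q.2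
      rw [Real.dist_eq, Prod.dist_eq, Real.dist_eq, Real.dist_eq,
        Real.coe_toNNReal _ (by positivity)]
      have h2 : |p.1-q.1| ≤ max |p.1-q.1| |p.2-q.2| := le_max_left _ _
      have h3 : |p.2-q.2| ≤ max |p.1-q.1| |p.2-q.2| := le_max_right _ _
      have h4 : M ≤ |M| := le_abs_self M
      have h5 : (0:ℝ) ≤ |p.1-q.1| + |p.2-q.2| := by positivity
      have h6 := mul_le_mul_of_nonneg_right h4 h5
      have h7 := mul_le_mul_of_nonneg_left (add_le_add h2 h3) (abs_nonneg M)
      linarith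
    exact hlip.continuous
  have hF : ∀ s x : ℝ, |mollF f ρ₂ n s x| ≤ 2*K*(1+|x|) :=
    fun s x => mollF_bound K hK f hfc hgrow ρ₂ hρ₂ n s x
  have hhn : 0 < h n := hh n
  set τ := tauPt a (h n) t with hτ
  have hτmem : τ ∈ Set.Ico a (a + h n) := by
    constructor
    · rw [hτ, tauPt]
      nlinarith [Int.fract_nonneg ((t-a)/h n), hhn.le]
    · rw [hτ, tauPt]
      nlinarith [Int.fract_lt_one ((t-a)/h n)]
  obtain ⟨m, hm⟩ : ∃ m : ℕ, t = τ + (m:ℝ) * h n := by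
    set q := (t - a) / h n with hq
    have hq0 : (0:ℝ) ≤ q := div_nonneg (by linarith [ht.1]) hhn.le
    refine ⟨(⌊q⌋).toNat, ?_⟩
    have hcast : ((⌊q⌋.toNat : ℕ) : ℝ) = (⌊q⌋ : ℝ) := by
      exact_mod_cast congrArg (Int.cast : ℤ → ℝ) (Int.toNat_of_nonneg (Int.floor_nonneg.2 hq0))
    rw [hτ, tauPt, hcast, ← hq]
    have h1 : Int.fract q + (⌊q⌋ : ℝ) = q := Int.fract_add_floor q
    have h2 : h n * q = t - a := by
      rw [hq]; field_simp
    nlinarith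
  set d : ℕ → ℝ := fun k => |mollL L ρ n (τ + ((k:ℝ)+1)*h n) - mollL L ρ n (τ + (k:ℝ)*h n)|
    with hd
  have hd0 : ∀ k, 0 ≤ d k := fun k => abs_nonneg _
  have hsum : ∀ m : ℕ, ∑ k ∈ Finset.range m, d k ≤ V :=
    fun m => mollL_sum_bound a b hab.le L hLm hVar hla hlb ρ hρ n τ (h n) hhn.le m
  have key : ∀ m : ℕ, 1 + |X n (τ + (m:ℝ) * h n)|
      ≤ (1 + |xini n τ|) * Real.exp (2*K* ∑ k ∈ Finset.range m, d k) := by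
    intro m
    induction m with
    | zero =>
      simp only [Nat.cast_zero, zero_mul, add_zero, Finset.range_zero, Finset.sum_empty,
        mul_zero, Real.exp_zero, mul_one]
      rw [hXini n τ hτmem]
    | succ m ih =>
      have ha' : a ≤ τ + (m:ℝ) * h n := by
        have h1 : (0:ℝ) ≤ (m:ℝ) * h n := by positivity
        linarith [hτmem.1]
      have hrec := hXrec n (τ + (m:ℝ) * h n) ha'
      have e1 : τ + ((m:ℕ)+1 : ℕ) * h n = (τ + (m:ℝ) * h n) + h n := by push_cast; ring
      rw [e1, hrec]
      set y := X n (τ + (m:ℝ)*h n) with hy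
      have hstep : |y + mollF f ρ₂ n (τ + (m:ℝ)*h n) y *
          (mollL L ρ n ((τ + (m:ℝ)*h n) + h n) - mollL L ρ n (τ + (m:ℝ)*h n))|
          ≤ |y| + 2*K*(1+|y|) * d m := by
        refine (abs_add_le _ _).trans ?_
        rw [abs_mul]
        have e2 : (τ + (m:ℝ)*h n) + h n = τ + ((m:ℝ)+1)*h n := by ring
        rw [e2]
        have := mul_le_mul_of_nonneg_right (hF (τ + (m:ℝ)*h n) y)
          (abs_nonneg (mollL L ρ n (τ + ((m:ℝ)+1)*h n) - mollL L ρ n (τ + (m:ℝ)*h n)))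
        rw [hd]
        linarith
      have hexp : 1 + 2*K*d m ≤ Real.exp (2*K*d m) := by
        have := Real.add_one_le_exp (2*K*d m); linarith
      have hy1 : (0:ℝ) ≤ 1 + |y| := by positivity
      calc 1 + |y + mollF f ρ₂ n (τ + (m:ℝ)*h n) y *
            (mollL L ρ n ((τ + (m:ℝ)*h n) + h n) - mollL L ρ n (τ + (m:ℝ)*h n))|
          ≤ (1 + |y|) * (1 + 2*K*d m) := by nlinarith [hstep]
        _ ≤ (1 + |y|) * Real.exp (2*K*d m) := by
            exact mul_le_mul_of_nonneg_left hexp hy1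
        _ ≤ ((1 + |xini n τ|) * Real.exp (2*K* ∑ k ∈ Finset.range m, d k))
              * Real.exp (2*K*d m) := by
            exact mul_le_mul_of_nonneg_right ih (Real.exp_nonneg _)
        _ = (1 + |xini n τ|) * Real.exp (2*K* ∑ k ∈ Finset.range (m+1), d k) := by
            rw [mul_assoc, ← Real.exp_add, Finset.sum_range_succ]
            ring_nf
  have hfin := key m
  rw [← hm] at hfin
  have hmono : Real.exp (2*K* ∑ k ∈ Finset.range m, d k) ≤ Real.exp (2*K*V) := by
    apply Real.exp_le_exp.2
    have := hsum m
    nlinarith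
  have hx0 : (0:ℝ) ≤ 1 + |xini n τ| := by positivity
  calc |X n t| ≤ 1 + |X n t| := by linarith [abs_nonneg (X n t)]
    _ ≤ (1 + |xini n τ|) * Real.exp (2*K* ∑ k ∈ Finset.range m, d k) := hfin
    _ ≤ (1 + |xini n τ|) * Real.exp (2*K*V) := mul_le_mul_of_nonneg_left hmono hx0
    _ = Real.exp (2*K*V) * (1 + |xini n τ|) := mul_comm _ _

end
end
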